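/- arXiv:math/0607596 — 12 statements merged into one kernel-verified Lean document; each statement's English description precedes it below -/
import Mathlib

section
/- Let 0 ≤ σ₀ < a < b ≤ σ̄, let E : [σ₀,σ̄] → ℝ be nonincreasing, concave on [a,b], and satisfy E(a) > E(b). Let σ_FM : [0,∞) → [σ₀,σ̄] be a Francfort–Marigo crack trajectory (i.e. it satisfies conditions (i), (ii), (iii)) with σ_FM(0) < a. Then σ_FM is not continuous on [0,∞). -/
open Set Filter

/-!
Suppose `σFM` were continuous. Writing `t*² = (b - a) / (E a - E b)`, the concavity of `E` on
`[a, b]` puts `E` above its chord there. Stability against jumping to `b` (condition (ii)) then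
forces every time at which `σFM ∈ (a, b)` to be at most `t*`, while energy decrease from the time
at which `σFM = a` (condition (iii)) forces every such time to be at least `t*`. For large times
`σFM ≥ b`, so by the intermediate value theorem `σFM` passes through two distinct values of
`(a, b)` at two distinct times, which cannot both equal `t*`.
-/

lemma ConcaveOn.chord_le_mul {E : ℝ → ℝ} {a b c : ℝ} (hE : ConcaveOn ℝ (Icc a b) E)
    (hac : a < c) (hcb : c < b) : (b - c) * E a + (c - a) * E b ≤ (b - a) * E c := by
  have hab : a ≤ b := (hac.trans hcb).le
  have := hE.neg.secant_mono_aux1 (left_mem_Icc.2 hab) (right_mem_Icc.2 hab) hac hcb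
  simp only [Pi.neg_apply] at this
  linarith

section Trajectory

variable {σ₀ σmax a b : ℝ} {E σFM : ℝ → ℝ}

lemma sq_mul_sub_le_of_stable (hb : b ∈ Icc σ₀ σmax) (hEconc : ConcaveOn ℝ (Icc a b) E)
    (hii : ∀ t, 0 ≤ t → ∀ σ ∈ Icc σ₀ σmax, σFM t ≤ σ →
      t ^ 2 * E (σFM t) + σFM t ≤ t ^ 2 * E σ + σ)
    {t : ℝ} (ht : 0 ≤ t) (hσt : σFM t ∈ Ioo a b) :
    t ^ 2 * (E a - E b) ≤ b - a := by
  set c := σFM t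
  have hstable := hii t ht b hb hσt.2.le
  have hchord := hEconc.chord_le_mul hσt.1 hσt.2
  have hbc : 0 < b - c := sub_pos.2 hσt.2
  refine le_of_mul_le_mul_left ?_ hbc
  calc (b - c) * (t ^ 2 * (E a - E b))
      ≤ (b - a) * (t ^ 2 * (E c - E b)) := by nlinarith [sq_nonneg t]
    _ ≤ (b - c) * (b - a) := by nlinarith [hσt.1]

lemma sub_le_sq_mul_of_energy_decrease (hEconc : ConcaveOn ℝ (Icc a b) E)
    (hiii : ∀ s t : ℝ, 0 ≤ s → s ≤ t →
      t ^ 2 * E (σFM t) + σFM t ≤ t ^ 2 * E (σFM s) + σFM s)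
    {s t : ℝ} (hs : 0 ≤ s) (hst : s ≤ t) (hσs : σFM s = a) (hσt : σFM t ∈ Ioo a b) :
    b - a ≤ t ^ 2 * (E a - E b) := by
  set c := σFM t
  have hdecrease := hiii s t hs hst
  rw [hσs] at hdecrease
  have hchord := hEconc.chord_le_mul hσt.1 hσt.2
  have hca : 0 < c - a := sub_pos.2 hσt.1
  refine le_of_mul_le_mul_left ?_ hca
  calc (c - a) * (b - a)
      ≤ (b - a) * (t ^ 2 * (E a - E c)) := by nlinarith [hσt.2]
    _ ≤ (c - a) * (t ^ 2 * (E a - E b)) := by nlinarith [sq_nonneg t]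

lemma le_of_stable_of_sub_lt_sq_mul (ha : a ∈ Icc σ₀ σmax) (hb : b ∈ Icc σ₀ σmax)
    (hEmono : AntitoneOn E (Icc σ₀ σmax)) (hEconc : ConcaveOn ℝ (Icc a b) E)
    (hmap : ∀ t, 0 ≤ t → σFM t ∈ Icc σ₀ σmax)
    (hii : ∀ t, 0 ≤ t → ∀ σ ∈ Icc σ₀ σmax, σFM t ≤ σ →
      t ^ 2 * E (σFM t) + σFM t ≤ t ^ 2 * E σ + σ)
    {t : ℝ} (ht : 0 ≤ t) (hlarge : b - σ₀ < t ^ 2 * (E a - E b)) :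
    b ≤ σFM t := by
  by_contra! hσb
  rcases le_or_gt (σFM t) a with hσa | hσa
  · have hEa : E a ≤ E (σFM t) := hEmono (hmap t ht) ha hσa
    have hstable := hii t ht b hb hσb.le
    nlinarith [sq_nonneg t, (hmap t ht).1]
  · have := sq_mul_sub_le_of_stable hb hEconc hii ht ⟨hσa, hσb⟩
    linarith [ha.1]

end Trajectory

theorem francfort_marigo_discontinuous_general
    (σ₀ a b σmax : ℝ) (h1 : σ₀ < a) (h2 : a < b) (h3 : b ≤ σmax)
    (E : ℝ → ℝ)
    (hEmono : AntitoneOn E (Icc σ₀ σmax))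
    (hEconc : ConcaveOn ℝ (Icc a b) E)
    (hEab : E b < E a)
    (σFM : ℝ → ℝ)
    (hmap : ∀ t, 0 ≤ t → σFM t ∈ Icc σ₀ σmax)
    (hi : MonotoneOn σFM (Ici 0))
    (hii : ∀ t, 0 ≤ t → ∀ σ ∈ Icc σ₀ σmax, σFM t ≤ σ →
      t ^ 2 * E (σFM t) + σFM t ≤ t ^ 2 * E σ + σ)
    (hiii : ∀ s t : ℝ, 0 ≤ s → s ≤ t →
      t ^ 2 * E (σFM t) + σFM t ≤ t ^ 2 * E (σFM s) + σFM s)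
    (hinit : σFM 0 < a) :
    ¬ ContinuousOn σFM (Ici 0) := by
  intro hcont
  have ha : a ∈ Icc σ₀ σmax := ⟨h1.le, h2.le.trans h3⟩
  have hb : b ∈ Icc σ₀ σmax := ⟨h1.le.trans h2.le, h3⟩
  obtain ⟨T, hT, hlarge⟩ : ∃ T, 0 ≤ T ∧ b - σ₀ < T ^ 2 * (E a - E b) :=
    ((eventually_ge_atTop 0).and <| ((tendsto_pow_atTop two_ne_zero).atTop_mul_const
      (sub_pos.2 hEab)).eventually_gt_atTop (b - σ₀)).exists
  have hσT := le_of_stable_of_sub_lt_sq_mul ha hb hEmono hEconc hmap hii hT hlarge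
  have hIVT : Icc (σFM 0) (σFM T) ⊆ σFM '' Icc 0 T :=
    intermediate_value_Icc hT (hcont.mono Icc_subset_Ici_self)
  obtain ⟨c₁, c₂, hac₁, hc₁₂, hc₂b⟩ : ∃ c₁ c₂, a < c₁ ∧ c₁ < c₂ ∧ c₂ < b :=
    ⟨(2 * a + b) / 3, (a + 2 * b) / 3, by linarith, by linarith, by linarith⟩
  obtain ⟨ta, hta, hσta⟩ := hIVT ⟨hinit.le, by linarith⟩
  obtain ⟨t₁, ht₁, hσt₁⟩ := hIVT (show c₁ ∈ _ from ⟨by linarith, by linarith⟩)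
  obtain ⟨t₂, ht₂, hσt₂⟩ := hIVT (show c₂ ∈ _ from ⟨by linarith, by linarith⟩)
  have hta₁ : ta < t₁ := hi.reflect_lt hta.1 ht₁.1 (by linarith)
  have ht₁₂ : t₁ < t₂ := hi.reflect_lt ht₁.1 ht₂.1 (by linarith)
  have hlow := sub_le_sq_mul_of_energy_decrease hEconc hiii hta.1 hta₁.le hσta
    (hσt₁ ▸ ⟨hac₁, hc₁₂.trans hc₂b⟩)
  have hup := sq_mul_sub_le_of_stable hb hEconc hii ht₂.1
    (hσt₂ ▸ ⟨hac₁.trans hc₁₂, hc₂b⟩)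
  have hsq : t₁ ^ 2 < t₂ ^ 2 := pow_lt_pow_left₀ ht₁₂ ht₁.1 two_ne_zero
  nlinarith

/-- Proposition 5.1: a Francfort–Marigo crack trajectory must be discontinuous if the
minimal energy has a concavity interval. -/
theorem francfort_marigo_discontinuous
    (σ₀ a b σmax : ℝ) (h0 : 0 ≤ σ₀) (h1 : σ₀ < a) (h2 : a < b) (h3 : b ≤ σmax)
    (E : ℝ → ℝ)
    (hEmono : AntitoneOn E (Icc σ₀ σmax))
    (hEconc : ConcaveOn ℝ (Icc a b) E)
    (hEab : E b < E a)
    (σFM : ℝ → ℝ)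
    (hmap : ∀ t, 0 ≤ t → σFM t ∈ Icc σ₀ σmax)
    (hi : MonotoneOn σFM (Ici 0))
    (hii : ∀ t, 0 ≤ t → ∀ σ ∈ Icc σ₀ σmax, σFM t ≤ σ →
      t ^ 2 * E (σFM t) + σFM t ≤ t ^ 2 * E σ + σ)
    (hiii : ∀ s t : ℝ, 0 ≤ s → s ≤ t →
      t ^ 2 * E (σFM t) + σFM t ≤ t ^ 2 * E (σFM s) + σFM s)
    (hinit : σFM 0 < a) :
    ¬ ContinuousOn σFM (Ici 0) :=
  francfort_marigo_discontinuous_general σ₀ a b σmax h1 h2 h3 E hEmono hEconc hEab σFM hmap hi hii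
    hiii hinit
end

section
/- Let 0 ≤ σ₀ < a < b ≤ σ̄, let E : [σ₀,σ̄] → ℝ be nonincreasing with E(a) > E(b), and let σ_FM : [0,∞) → [σ₀,σ̄] satisfy condition (ii). Then for every t ≥ 0 with t²·(E(a) − E(b)) > b − σ₀, one has σ_FM(t) ≥ a. -/
open Set

/-- First step in the proof of Proposition 5.1: under the global minimality
condition (ii), for large times the Francfort–Marigo trajectory must exceed `a`. -/
theorem francfort_marigo_exceeds
    (σ₀ a b σmax : ℝ) (h0 : 0 ≤ σ₀) (h1 : σ₀ < a) (h2 : a < b) (h3 : b ≤ σmax)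
    (E : ℝ → ℝ)
    (hEmono : AntitoneOn E (Icc σ₀ σmax))
    (hEab : E b < E a)
    (σFM : ℝ → ℝ)
    (hmap : ∀ t, 0 ≤ t → σFM t ∈ Icc σ₀ σmax)
    (hii : ∀ t, 0 ≤ t → ∀ σ ∈ Icc σ₀ σmax, σFM t ≤ σ →
      t ^ 2 * E (σFM t) + σFM t ≤ t ^ 2 * E σ + σ) :
    ∀ t, 0 ≤ t → b - σ₀ < t ^ 2 * (E a - E b) → a ≤ σFM t := by
  intro t ht hbig
  by_contra hlt
  push_neg at hlt
  obtain ⟨hσ0, hσmax⟩ := hmap t ht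
  have hb : b ∈ Icc σ₀ σmax := ⟨by linarith, h3⟩
  have ha : a ∈ Icc σ₀ σmax := ⟨le_of_lt h1, by linarith⟩
  have key := hii t ht b hb (by linarith)
  have hEa : E a ≤ E (σFM t) := hEmono ⟨hσ0, hσmax⟩ ha hlt.le
  have ht2 : 0 ≤ t ^ 2 := sq_nonneg t
  nlinarith [mul_le_mul_of_nonneg_left hEa ht2]
end

section
/- Let 0 ≤ σ₀ < a < b ≤ σ̄, let E : [σ₀,σ̄] → ℝ be nonincreasing, concave on [a,b], and satisfy E(a) > E(b), and set t* := √((b−a)/(E(a)−E(b))). Let σ_FM : [0,∞) → [σ₀,σ̄] satisfy condition (iii), and suppose σ_FM(t̄) = a for some t̄ ≥ 0. Then for every t with t̄ < t < t*, σ_FM(t) ∉ (a,b]. -/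
open Set

/-- The avoidance claim in the proof of Proposition 5.1: once the trajectory reaches `a`,
under condition (iii) it cannot take values in `(a, b]` before the critical time
`t* = √((b−a)/(E a − E b))`. -/
theorem francfort_marigo_avoid_before_critical
    (σ₀ a b σmax : ℝ) (h0 : 0 ≤ σ₀) (h1 : σ₀ < a) (h2 : a < b) (h3 : b ≤ σmax)
    (E : ℝ → ℝ)
    (hEmono : AntitoneOn E (Icc σ₀ σmax))
    (hEconc : ConcaveOn ℝ (Icc a b) E)
    (hEab : E b < E a)
    (σFM : ℝ → ℝ)
    (hmap : ∀ t, 0 ≤ t → σFM t ∈ Icc σ₀ σmax)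
    (hiii : ∀ s t : ℝ, 0 ≤ s → s ≤ t →
      t ^ 2 * E (σFM t) + σFM t ≤ t ^ 2 * E (σFM s) + σFM s)
    (tbar : ℝ) (htbar : 0 ≤ tbar) (hta : σFM tbar = a) :
    ∀ t : ℝ, tbar < t → t < Real.sqrt ((b - a) / (E a - E b)) →
      σFM t ∉ Ioc a b := by
  intro t ht1 ht2 hmem
  set c := σFM t with hcdef
  have hca : a < c := hmem.1
  have hcb : c ≤ b := hmem.2
  have hba : (0:ℝ) < b - a := by linarith
  have ht0 : 0 ≤ t := le_trans htbar ht1.le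
  -- condition (iii)
  have hi := hiii tbar t htbar ht1.le
  rw [hta] at hi
  -- concavity
  have hμ0 : 0 ≤ (c - a) / (b - a) := by
    apply div_nonneg _ hba.le; linarith
  have hl0 : 0 ≤ (b - c) / (b - a) := by
    apply div_nonneg _ hba.le; linarith
  have hsum : (b - c) / (b - a) + (c - a) / (b - a) = 1 := by
    field_simp
    ring
  have hconv := hEconc.2 (x := a) (y := b)
    ⟨le_refl a, h2.le⟩ ⟨h2.le, le_refl b⟩ hl0 hμ0 hsum
  have hcomb : ((b - c) / (b - a)) • a + ((c - a) / (b - a)) • b = c := by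
    simp only [smul_eq_mul]
    field_simp
    ring
  rw [hcomb] at hconv
  simp only [smul_eq_mul] at hconv
  -- from hi : t^2 * E c + c ≤ t^2 * E a + a
  -- from hconv : (b-c)/(b-a)*E a + (c-a)/(b-a)*E b ≤ E c
  have hconv' : (b - c) * E a + (c - a) * E b ≤ (b - a) * E c := by
    have := mul_le_mul_of_nonneg_left hconv hba.le
    have h := this
    field_simp at h
    linarith [h]
  -- get t^2 * (E a - E b) ≥ b - a
  have key : b - a ≤ t ^ 2 * (E a - E b) := by
    nlinarith [sq_nonneg t, hi, hconv']
  -- contradiction with t < sqrt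
  have hq : 0 < (b - a) / (E a - E b) := by
    apply div_pos hba; linarith
  have := (Real.lt_sqrt ht0).mp ht2
  have : t ^ 2 * (E a - E b) < b - a := by
    have hEpos : 0 < E a - E b := by linarith
    calc t ^ 2 * (E a - E b) < ((b - a) / (E a - E b)) * (E a - E b) := by
          apply mul_lt_mul_of_pos_right this hEpos
      _ = b - a := by field_simp
  linarith
end

section
/- Let 0 ≤ σ₀ < a < b ≤ σ̄, let E : [σ₀,σ̄] → ℝ be nonincreasing, concave on [a,b], and satisfy E(a) > E(b), and set t* := √((b−a)/(E(a)−E(b))). Let σ_FM : [0,∞) → [σ₀,σ̄] satisfy condition (ii). Then for every t > t* with σ_FM(t) ≥ a, one has σ_FM(t) ≥ b. -/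
open Set

/-- Claim (disc4) in the proof of Proposition 5.1: after the critical time
`t* = √((b−a)/(E a − E b))`, under condition (ii) the trajectory must lie beyond `b`
as soon as it is beyond `a`. -/
theorem francfort_marigo_beyond_after_critical
    (σ₀ a b σmax : ℝ) (h0 : 0 ≤ σ₀) (h1 : σ₀ < a) (h2 : a < b) (h3 : b ≤ σmax)
    (E : ℝ → ℝ)
    (hEmono : AntitoneOn E (Icc σ₀ σmax))
    (hEconc : ConcaveOn ℝ (Icc a b) E)
    (hEab : E b < E a)
    (σFM : ℝ → ℝ)
    (hmap : ∀ t, 0 ≤ t → σFM t ∈ Icc σ₀ σmax)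
    (hii : ∀ t, 0 ≤ t → ∀ σ ∈ Icc σ₀ σmax, σFM t ≤ σ →
      t ^ 2 * E (σFM t) + σFM t ≤ t ^ 2 * E σ + σ) :
    ∀ t : ℝ, Real.sqrt ((b - a) / (E a - E b)) < t → a ≤ σFM t → b ≤ σFM t := by
  intro t ht ha
  by_contra hb
  push_neg at hb
  set s := σFM t with hs
  have ht0 : 0 ≤ t := le_trans (Real.sqrt_nonneg _) ht.le
  have hbmem : b ∈ Icc σ₀ σmax := ⟨by linarith, h3⟩
  have key := hii t ht0 b hbmem (by linarith)
  have hba : 0 < b - a := by linarith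
  set lam := (s - a) / (b - a) with hlam
  have hlam0 : 0 ≤ lam := div_nonneg (by linarith) hba.le
  have hlam1 : lam < 1 := (div_lt_one hba).mpr (by linarith)
  have hsc : (1 - lam) • a + lam • b = s := by
    simp only [smul_eq_mul, hlam]
    field_simp
    ring
  have hconc := hEconc.2 (left_mem_Icc.mpr h2.le) (right_mem_Icc.mpr h2.le)
    (by linarith : (0:ℝ) ≤ 1 - lam) hlam0 (by ring)
  rw [hsc] at hconc
  simp only [smul_eq_mul] at hconc
  -- hconc : (1-lam) * E a + lam * E b ≤ E s
  have hbs : b - s = (1 - lam) * (b - a) := by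
    rw [← hsc]; simp [smul_eq_mul]; ring
  -- from key : t^2 * (E s - E b) ≤ b - s
  have h5 : t ^ 2 * ((1 - lam) * (E a - E b)) ≤ (1 - lam) * (b - a) := by
    nlinarith [key]
  have h6 : t ^ 2 * (E a - E b) ≤ b - a := by
    have hpos : 0 < 1 - lam := by linarith
    nlinarith [h5]
  have hr : 0 < (b - a) / (E a - E b) := div_pos hba (by linarith)
  have hsq : Real.sqrt ((b - a) / (E a - E b)) ^ 2 = (b - a) / (E a - E b) :=
    Real.sq_sqrt hr.le
  have ht2 : (b - a) / (E a - E b) < t ^ 2 := by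
    calc (b - a) / (E a - E b) = Real.sqrt ((b - a) / (E a - E b)) ^ 2 := hsq.symm
    _ < t ^ 2 := by
        apply pow_lt_pow_left₀ ht (Real.sqrt_nonneg _) (by norm_num)
  have : b - a < t ^ 2 * (E a - E b) := by
    rw [div_lt_iff₀ (by linarith : (0:ℝ) < E a - E b)] at ht2
    linarith [ht2]
  linarith
end

section
/- Let 0 ≤ σ₀ < a < b ≤ σ̄, let E : [σ₀,σ̄] → ℝ be nonincreasing, concave on [a,b], and satisfy E(a) > E(b), and set t* := √((b−a)/(E(a)−E(b))). Let σ_FM : [0,∞) → [σ₀,σ̄] satisfy conditions (i) and (iii), suppose σ_FM(t̄) = a for some t̄ ≥ 0 with t̄ < t*, and suppose σ_FM is continuous on [t̄, t*). Then σ_FM(t) = a for every t ∈ [t̄, t*). -/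
/-!
Monotonicity gives `σFM t ≥ a` for `t ≥ t̄`. Comparing the energies at `t̄` and `t`
gives `σFM t - a ≤ t² (E a - E (σFM t))`, and concavity bounds `E a - E x` by the chord,
`(x - a) (E a - E b) / (b - a)`, for `x ∈ [a, b]`. For `t < t*` this forces `σFM t ∉ (a, b]`,
and continuity (intermediate values) then rules out jumping over `(a, b]` as well.
-/

open Set

theorem ConcaveOn.sub_mul_le_chord {E : ℝ → ℝ} {a b x : ℝ} (hE : ConcaveOn ℝ (Icc a b) E)
    (hax : a < x) (hxb : x ≤ b) : (E a - E x) * (b - a) ≤ (x - a) * (E a - E b) := by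
  rcases hxb.lt_or_eq with hxb | rfl
  · have hchord := hE.neg.secant_mono_aux1 (left_mem_Icc.2 (hax.trans hxb).le)
      (right_mem_Icc.2 (hax.trans hxb).le) hax hxb
    simp only [Pi.neg_apply] at hchord
    linarith
  · exact le_of_eq (by ring)

theorem notMem_Ioc_of_energy_le {E : ℝ → ℝ} {a b s x : ℝ} (hE : ConcaveOn ℝ (Icc a b) E)
    (hs : s ^ 2 * (E a - E b) < b - a) (henergy : s ^ 2 * E x + x ≤ s ^ 2 * E a + a) :
    x ∉ Ioc a b := by
  rintro ⟨hax, hxb⟩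
  have hxa : 0 < x - a := sub_pos.2 hax
  have hba : 0 ≤ b - a := by linarith
  have hchord := hE.sub_mul_le_chord hax hxb
  have : (x - a) * (b - a) < (x - a) * (b - a) :=
    calc (x - a) * (b - a) ≤ s ^ 2 * (E a - E x) * (b - a) := by gcongr; linarith
      _ = s ^ 2 * ((E a - E x) * (b - a)) := by ring
      _ ≤ s ^ 2 * ((x - a) * (E a - E b)) := by gcongr
      _ = (x - a) * (s ^ 2 * (E a - E b)) := by ring
      _ < (x - a) * (b - a) := by gcongr
  exact this.false

theorem sq_mul_lt_of_lt_sqrt_div {c d s : ℝ} (hc : 0 < c) (hs : 0 ≤ s)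
    (hst : s < Real.sqrt (d / c)) : s ^ 2 * c < d := by
  rw [← lt_div_iff₀ hc]
  exact (Real.lt_sqrt hs).1 hst

theorem ContinuousOn.exists_mem_Icc_mem_Ioc {f : ℝ → ℝ} {a b t₀ t : ℝ}
    (hf : ContinuousOn f (Icc t₀ t)) (hab : a < b) (ht : t₀ ≤ t) (hf₀ : f t₀ = a)
    (hft : a < f t) :
    ∃ s ∈ Icc t₀ t, f s ∈ Ioc a b := by
  have hmin : min (f t) b ∈ Icc (f t₀) (f t) :=
    ⟨hf₀ ▸ le_min hft.le hab.le, min_le_left _ _⟩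
  obtain ⟨s, hs, hfs⟩ := intermediate_value_Icc ht hf hmin
  exact ⟨s, hs, hfs ▸ ⟨lt_min hft hab, min_le_right _ _⟩⟩

theorem francfort_marigo_constancy_general
    (a b : ℝ) (h2 : a < b)
    (E : ℝ → ℝ)
    (hEconc : ConcaveOn ℝ (Icc a b) E)
    (hEab : E b < E a)
    (σFM : ℝ → ℝ)
    (hi : MonotoneOn σFM (Ici 0))
    (hiii : ∀ s t : ℝ, 0 ≤ s → s ≤ t →
      t ^ 2 * E (σFM t) + σFM t ≤ t ^ 2 * E (σFM s) + σFM s)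
    (tbar : ℝ) (htbar : 0 ≤ tbar) (hta : σFM tbar = a)
    (hcont : ContinuousOn σFM (Ico tbar (Real.sqrt ((b - a) / (E a - E b))))) :
    ∀ t ∈ Ico tbar (Real.sqrt ((b - a) / (E a - E b))), σFM t = a := by
  have notMem_Ioc : ∀ s ∈ Ico tbar (Real.sqrt ((b - a) / (E a - E b))), σFM s ∉ Ioc a b :=
    fun s ⟨hs, hst⟩ ↦ notMem_Ioc_of_energy_le hEconc
      (sq_mul_lt_of_lt_sqrt_div (sub_pos.2 hEab) (htbar.trans hs) hst)
      (hta ▸ hiii tbar s htbar hs)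
  rintro t ⟨ht, htt⟩
  have hge : a ≤ σFM t := hta ▸ hi htbar (htbar.trans ht) ht
  refine hge.eq_or_lt.elim Eq.symm fun hgt ↦ ?_
  obtain ⟨s, hs, hs_mem⟩ :=
    (hcont.mono (Icc_subset_Ico_right htt)).exists_mem_Icc_mem_Ioc h2 ht hta hgt
  exact absurd hs_mem (notMem_Ioc s ⟨hs.1, hs.2.trans_lt htt⟩)

/-- Claim (disc1) in the proof of Proposition 5.1: if the trajectory reaches `a` at time
`t̄ < t*` and is continuous on `[t̄, t*)`, then it stays equal to `a` on `[t̄, t*)`. -/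
theorem francfort_marigo_constancy
    (σ₀ a b σmax : ℝ) (h0 : 0 ≤ σ₀) (h1 : σ₀ < a) (h2 : a < b) (h3 : b ≤ σmax)
    (E : ℝ → ℝ)
    (hEmono : AntitoneOn E (Icc σ₀ σmax))
    (hEconc : ConcaveOn ℝ (Icc a b) E)
    (hEab : E b < E a)
    (σFM : ℝ → ℝ)
    (hmap : ∀ t, 0 ≤ t → σFM t ∈ Icc σ₀ σmax)
    (hi : MonotoneOn σFM (Ici 0))
    (hiii : ∀ s t : ℝ, 0 ≤ s → s ≤ t →
      t ^ 2 * E (σFM t) + σFM t ≤ t ^ 2 * E (σFM s) + σFM s)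
    (tbar : ℝ) (htbar : 0 ≤ tbar) (hta : σFM tbar = a)
    (htstar : tbar < Real.sqrt ((b - a) / (E a - E b)))
    (hcont : ContinuousOn σFM (Ico tbar (Real.sqrt ((b - a) / (E a - E b))))) :
    ∀ t ∈ Ico tbar (Real.sqrt ((b - a) / (E a - E b))), σFM t = a :=
  francfort_marigo_constancy_general a b h2 E hEconc hEab σFM hi hiii tbar htbar hta hcont
end

section
/- Fix T > 0 and 0 ≤ σ₀ < σ̄. Let E : [σ₀,σ̄] → ℝ be continuous and let σ : [0,T] → [σ₀,σ̄] be nondecreasing, left-continuous, and satisfy condition (c′). Let t ∈ (0,T] be such that E is differentiable at σ(t) and the upper left derivative σ̇⊖(t) := limsup_{s→t⁻} (σ(t) − σ(s))/(t − s) is strictly positive (possibly +∞). Then 1 + t²·E′(σ(t)) ≤ 0. -/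
open Set

set_option maxHeartbeats 1000000

/-- Remark 5.2: if the energy inequality (c′) holds and the upper left derivative of the
crack length is strictly positive at `t`, then `1 + t²·E′(σ(t)) ≤ 0`. -/
theorem energy_inequality_left_derivative
    (T σ₀ σmax : ℝ) (hT : 0 < T) (h0 : 0 ≤ σ₀) (h1 : σ₀ < σmax)
    (E : ℝ → ℝ) (hE : ContinuousOn E (Icc σ₀ σmax))
    (σ : ℝ → ℝ)
    (hmap : ∀ t ∈ Icc (0:ℝ) T, σ t ∈ Icc σ₀ σmax)
    (hmono : MonotoneOn σ (Icc 0 T))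
    (hlc : ∀ t ∈ Ioc (0:ℝ) T, ContinuousWithinAt σ (Iio t) t)
    (hc' : ∀ s t : ℝ, 0 ≤ s → s < t → t ≤ T →
      t ^ 2 * E (σ t) + σ t ≤ s ^ 2 * E (σ s) + σ s + 2 * ∫ τ in s..t, τ * E (σ τ))
    (t : ℝ) (ht : t ∈ Ioc 0 T)
    (E' : ℝ) (hE' : HasDerivWithinAt E E' (Icc σ₀ σmax) (σ t))
    (hpos : 0 < Filter.limsup (fun s => (((σ t - σ s) / (t - s) : ℝ) : EReal))
      (nhdsWithin t (Iio t))) :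
    1 + t ^ 2 * E' ≤ 0 := by
  by_contra hcon
  push_neg at hcon
  obtain ⟨ht0, htT⟩ := ht
  set c : ℝ := 1 + t ^ 2 * E' with hcdef
  -- clamped versions of σ and E
  set σc : ℝ → ℝ := fun x => σ (min (max x 0) T) with hσcdef
  have hclamp : ∀ x : ℝ, min (max x 0) T ∈ Icc (0:ℝ) T := fun x =>
    ⟨le_min (le_max_right _ _) hT.le, min_le_right _ _⟩
  have hσc_mono : Monotone σc := fun x y hxy =>
    hmono (hclamp x) (hclamp y) (min_le_min (max_le_max hxy le_rfl) le_rfl)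
  have hσc_eq : ∀ x ∈ Icc (0:ℝ) T, σc x = σ x := by
    intro x hx
    simp only [hσcdef]
    rw [max_eq_left hx.1, min_eq_left hx.2]
  set Ec : ℝ → ℝ := fun y => E (min (max y σ₀) σmax) with hEcdef
  have hclampE : ∀ y : ℝ, min (max y σ₀) σmax ∈ Icc σ₀ σmax := fun y =>
    ⟨le_min (le_max_right _ _) h1.le, min_le_right _ _⟩
  have hEc_cont : Continuous Ec := by
    apply hE.comp_continuous
    · exact (continuous_id.max continuous_const).min continuous_const
    · exact hclampE
  have hEc_eq : ∀ y ∈ Icc σ₀ σmax, Ec y = E y := by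
    intro y hy
    simp only [hEcdef]
    rw [max_eq_left hy.1, min_eq_left hy.2]
  -- bound on E
  obtain ⟨C, hC⟩ := isCompact_Icc.exists_bound_of_continuousOn hE
  -- uniform continuity of E
  have hUC := isCompact_Icc.uniformContinuousOn_of_continuous hE
  rw [Metric.uniformContinuousOn_iff] at hUC
  -- the key eventual bound
  have key : ∀ ε : ℝ, 0 < ε →
      Filter.limsup (fun s => (((σ t - σ s) / (t - s) : ℝ) : EReal))
        (nhdsWithin t (Iio t)) ≤ (ε : EReal) := by
    intro ε hε
    apply Filter.limsup_le_of_le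
    · isBoundedDefault
    -- constants
    have ht2 : (0:ℝ) < t ^ 2 := by positivity
    set ε₁ : ℝ := c / (2 * t ^ 2) with hε₁def
    have hε₁ : 0 < ε₁ := by positivity
    set ε₂ : ℝ := c * ε / (4 * t) with hε₂def
    have hε₂ : 0 < ε₂ := by positivity
    -- little-o from the derivative
    rw [hasDerivWithinAt_iff_isLittleO, Asymptotics.isLittleO_iff] at hE'
    obtain ⟨δ₁, hδ₁, hO⟩ := Metric.mem_nhdsWithin_iff.mp (hE' hε₁)
    -- uniform continuity
    obtain ⟨δ₂, hδ₂, hUC'⟩ := hUC ε₂ hε₂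
    -- left continuity of σ at t
    have hlct : Filter.Tendsto σ (nhdsWithin t (Iio t)) (nhds (σ t)) := hlc t ⟨ht0, htT⟩
    have hev1 : ∀ᶠ s in nhdsWithin t (Iio t), dist (σ s) (σ t) < min δ₁ δ₂ :=
      (Metric.tendsto_nhds.mp hlct) _ (lt_min hδ₁ hδ₂)
    have hev2 : Ioo 0 t ∈ nhdsWithin t (Iio t) :=
      Ioo_mem_nhdsLT_of_mem ⟨ht0, le_rfl⟩
    filter_upwards [hev1, hev2] with s hd hs
    obtain ⟨hs0, hst⟩ := hs
    have hsT : s ≤ T := hst.le.trans htT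
    have hsIcc : s ∈ Icc (0:ℝ) T := ⟨hs0.le, hsT⟩
    have htIcc : t ∈ Icc (0:ℝ) T := ⟨ht0.le, htT⟩
    have hσs : σ s ∈ Icc σ₀ σmax := hmap s hsIcc
    have hσt : σ t ∈ Icc σ₀ σmax := hmap t htIcc
    have hD0 : 0 ≤ σ t - σ s := sub_nonneg.mpr (hmono hsIcc htIcc hst.le)
    set D : ℝ := σ t - σ s with hDdef
    have hdist : |σ s - σ t| < min δ₁ δ₂ := by
      rwa [Real.dist_eq] at hd
    have habs : |σ s - σ t| = D := by
      rw [abs_sub_comm, abs_of_nonneg hD0]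
    -- the energy inequality
    have hineq := hc' s t hs0.le hst htT
    -- integrability of the main integrand
    have hI1 : IntervalIntegrable (fun τ => τ * E (σ τ)) MeasureTheory.volume s t := by
      rw [intervalIntegrable_iff, uIoc_of_le hst.le]
      have hmble : MeasureTheory.AEStronglyMeasurable (fun τ => τ * Ec (σc τ))
          MeasureTheory.volume :=
        (measurable_id.mul (hEc_cont.measurable.comp hσc_mono.measurable)).aestronglyMeasurable
      have hbase : MeasureTheory.IntegrableOn (fun τ => τ * Ec (σc τ)) (Ioc s t) := by
        apply MeasureTheory.Measure.integrableOn_of_bounded (M := T * |C|)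
          measure_Ioc_lt_top.ne hmble
        rw [MeasureTheory.ae_restrict_iff' measurableSet_Ioc]
        apply MeasureTheory.ae_of_all
        intro τ hτ
        have hτIcc : τ ∈ Icc (0:ℝ) T := ⟨hs0.le.trans hτ.1.le, hτ.2.trans htT⟩
        rw [Real.norm_eq_abs, abs_mul, hσc_eq τ hτIcc, hEc_eq _ (hmap τ hτIcc)]
        apply mul_le_mul
        · rw [abs_of_nonneg hτIcc.1]; exact hτIcc.2
        · exact (hC _ (hmap τ hτIcc)).trans (le_abs_self C)
        · exact abs_nonneg _
        · exact hT.le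
      apply hbase.congr_fun _ measurableSet_Ioc
      intro τ hτ
      have hτIcc : τ ∈ Icc (0:ℝ) T := ⟨hs0.le.trans hτ.1.le, hτ.2.trans htT⟩
      show τ * Ec (σc τ) = τ * E (σ τ)
      rw [hσc_eq τ hτIcc, hEc_eq _ (hmap τ hτIcc)]
    have hI2 : IntervalIntegrable (fun τ => τ * E (σ s)) MeasureTheory.volume s t :=
      (continuous_id.mul continuous_const).intervalIntegrable s t
    -- split the integral
    have hsplit : (∫ τ in s..t, τ * E (σ τ)) =
        (∫ τ in s..t, τ * E (σ s)) + ∫ τ in s..t, τ * (E (σ τ) - E (σ s)) := by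
      have h1 : (∫ τ in s..t, τ * E (σ τ)) =
          ∫ τ in s..t, (τ * E (σ s) + (τ * E (σ τ) - τ * E (σ s))) := by
        apply intervalIntegral.integral_congr
        intro τ _
        ring
      rw [h1, intervalIntegral.integral_add hI2 (hI1.sub hI2)]
      congr 1
      apply intervalIntegral.integral_congr
      intro τ _
      ring
    have hconst : (∫ τ in s..t, τ * E (σ s)) = (t ^ 2 - s ^ 2) / 2 * E (σ s) := by
      rw [intervalIntegral.integral_mul_const, integral_id]
    -- bound the remainder integral
    have hJ : |∫ τ in s..t, τ * (E (σ τ) - E (σ s))| ≤ t * ε₂ * (t - s) := by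
      have := intervalIntegral.norm_integral_le_of_norm_le_const
        (C := t * ε₂) (f := fun τ => τ * (E (σ τ) - E (σ s))) (a := s) (b := t) ?_
      · rwa [Real.norm_eq_abs, abs_of_nonneg (sub_nonneg.mpr hst.le)] at this
      · intro τ hτ
        rw [uIoc_of_le hst.le] at hτ
        have hτIcc : τ ∈ Icc (0:ℝ) T := ⟨hs0.le.trans hτ.1.le, hτ.2.trans htT⟩
        have hστ : σ τ ∈ Icc σ₀ σmax := hmap τ hτIcc
        have hm1 : σ s ≤ σ τ := hmono hsIcc hτIcc hτ.1.le
        have hm2 : σ τ ≤ σ t := hmono hτIcc htIcc hτ.2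
        have hdistτ : dist (σ τ) (σ s) < δ₂ := by
          rw [Real.dist_eq, abs_of_nonneg (sub_nonneg.mpr hm1)]
          calc σ τ - σ s ≤ σ t - σ s := by linarith
            _ = |σ s - σ t| := habs.symm
            _ < δ₂ := hdist.trans_le (min_le_right _ _)
        have hEτ := hUC' _ hστ _ hσs hdistτ
        rw [Real.dist_eq] at hEτ
        rw [Real.norm_eq_abs, abs_mul]
        apply mul_le_mul
        · rw [abs_of_nonneg hτIcc.1]; exact hτ.2
        · exact hEτ.le
        · exact abs_nonneg _
        · exact ht0.le
    -- the little-o bound at σ s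
    have hlo : ‖E (σ s) - E (σ t) - (σ s - σ t) • E'‖ ≤ ε₁ * ‖σ s - σ t‖ := by
      refine hO ⟨?_, hσs⟩
      rw [Metric.mem_ball, Real.dist_eq]
      exact hdist.trans_le (min_le_left _ _)
    rw [Real.norm_eq_abs, Real.norm_eq_abs, smul_eq_mul, habs] at hlo
    have hlo' : E (σ s) - E (σ t) ≤ -E' * D + ε₁ * D := by
      have := (abs_le.mp hlo).2
      have hrw : (σ s - σ t) * E' = -D * E' := by rw [hDdef]; ring
      rw [hrw] at this
      linarith
    -- combine everything
    have hJ' := (abs_le.mp hJ).2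
    have hchain : D ≤ t ^ 2 * (E (σ s) - E (σ t)) + 2 * (t * ε₂ * (t - s)) := by
      rw [hsplit, hconst] at hineq
      nlinarith [hineq]
    have hε₁c : t ^ 2 * ε₁ = c / 2 := by
      rw [hε₁def]; field_simp
    have hD : D ≤ ε * (t - s) := by
      have h2 : D ≤ t ^ 2 * (-E' * D + ε₁ * D) + 2 * (t * ε₂ * (t - s)) := by
        nlinarith [hchain, hlo', ht2]
      have h3 : c / 2 * D ≤ 2 * (t * ε₂ * (t - s)) := by nlinarith [h2, hε₁c]
      have h4 : 2 * (t * ε₂ * (t - s)) = c / 2 * (ε * (t - s)) := by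
        rw [hε₂def]; field_simp; ring
      rw [h4] at h3
      have hcpos : 0 < c / 2 := by positivity
      exact le_of_mul_le_mul_left h3 hcpos
    have hfin : (σ t - σ s) / (t - s) ≤ ε := by
      rw [div_le_iff₀ (by linarith : (0:ℝ) < t - s)]
      exact hD
    exact_mod_cast EReal.coe_le_coe_iff.mpr hfin
  -- conclude
  obtain ⟨y, hy0, hy1⟩ := EReal.exists_between_coe_real hpos
  have hy0' : (0:ℝ) < y := by exact_mod_cast hy0
  exact absurd (hy1.trans_le (key y hy0')) (lt_irrefl _)
end

section
/- Fix T > 0 and 0 ≤ σ₀ < σ̄. Let E : [σ₀,σ̄] → ℝ be continuous and differentiable, with E′ strictly decreasing on an interval (a,b) ⊆ [σ₀,σ̄]. Let σ : [0,T] → [σ₀,σ̄] be left-continuous and satisfy conditions (a′), (b′), (c′). Suppose t₀ ∈ (0,T] is such that the upper left derivative σ̇⊖(t₀) := limsup_{s→t₀⁻} (σ(t₀) − σ(s))/(t₀ − s) is strictly positive and σ(t₀) ∈ (a,b). Then for every t ∈ (t₀, T], σ(t) ∉ (a,b). -/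
/-!
If `1 + t₀² E'(σ t₀) > 0`, the energy inequality on `[s, t₀]`, with `E` linearised at `σ t₀`
and the integral compared with `(t₀² - s²) E(σ s)`, gives
`(1 + t₀² E'(σ t₀) - o(1)) (σ t₀ - σ s) ≤ o(t₀ - s)`, so the left difference quotient of `σ`
tends to `0`. A positive upper left derivative therefore forces `1 + t₀² E'(σ t₀) ≤ 0`. For
`t > t₀` with `σ t ∈ (a, b)`, monotonicity of `σ` and antitonicity of `E'` then give
`1 + t² E'(σ t) < 1 + t₀² E'(σ t₀) ≤ 0`, contradicting (a′).
-/

open Set Filter MeasureTheory Topology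

theorem ContinuousOn.intervalIntegrable_comp_monotoneOn {f g : ℝ → ℝ} {a b c d : ℝ}
    (hab : a ≤ b) (hf : ContinuousOn f (Icc c d)) (hg : MonotoneOn g (Icc a b))
    (hmaps : MapsTo g (Icc a b) (Icc c d)) :
    IntervalIntegrable (f ∘ g) volume a b := by
  have hcd : c ≤ d := nonempty_Icc.1 ⟨g a, hmaps (left_mem_Icc.2 hab)⟩
  -- `f` need not be measurable off `Icc c d`, so measurability goes through `f ∘ projIcc`
  have hext : Continuous fun y => f (projIcc c d hcd y) :=
    hf.comp_continuous continuous_projIcc.subtype_val fun y => (projIcc c d hcd y).2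
  obtain ⟨M, hM⟩ := isCompact_Icc.exists_bound_of_continuousOn hf
  rw [intervalIntegrable_iff_integrableOn_Icc_of_le hab]
  have hint : IntegrableOn (fun x => f (projIcc c d hcd (g x))) (Icc a b) :=
    .of_bound measure_Icc_lt_top
      (hext.measurable.comp_aemeasurable
        (aemeasurable_restrict_of_monotoneOn measurableSet_Icc hg)).aestronglyMeasurable
      M (ae_of_all _ fun x => hM _ (projIcc c d hcd (g x)).2)
  refine hint.congr_fun (fun x hx => ?_) measurableSet_Icc
  simp only [Function.comp_apply, projIcc_of_mem hcd (hmaps hx)]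

theorem two_mul_integral_mul_le {F : ℝ → ℝ} {s t C : ℝ} (hs : 0 ≤ s) (hst : s ≤ t)
    (hF : IntervalIntegrable F volume s t) (hC : ∀ τ ∈ Icc s t, F τ ≤ C) :
    2 * ∫ τ in s..t, τ * F τ ≤ (t ^ 2 - s ^ 2) * C := by
  have hmono : ∫ τ in s..t, τ * F τ ≤ ∫ τ in s..t, τ * C :=
    intervalIntegral.integral_mono_on hst (hF.continuousOn_mul continuousOn_id)
      ((continuous_id.mul continuous_const).intervalIntegrable s t)
      fun τ hτ => mul_le_mul_of_nonneg_left (hC τ hτ) (hs.trans hτ.1)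
  rw [intervalIntegral.integral_mul_const, integral_id] at hmono
  linarith

theorem sub_le_of_energy_le {u F : ℝ → ℝ} {s t k θ : ℝ} (hs : 0 ≤ s) (hst : s < t)
    (henergy : t ^ 2 * F t + u t ≤ s ^ 2 * F s + u s + 2 * ∫ τ in s..t, τ * F τ)
    (hF : IntervalIntegrable F volume s t) (hosc : ∀ τ ∈ Icc s t, F τ ≤ F s + θ)
    (hslope : k * (u t - u s) ≤ F t - F s) :
    (1 + t ^ 2 * k) * (u t - u s) ≤ 2 * t * θ * (t - s) := by
  have hθ : 0 ≤ θ := by linarith [hosc s ⟨le_rfl, hst.le⟩]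
  have hint := two_mul_integral_mul_le hs hst.le hF hosc
  have hts : t ^ 2 - s ^ 2 ≤ 2 * t * (t - s) := by nlinarith
  nlinarith [mul_le_mul_of_nonneg_left hslope (sq_nonneg t), mul_le_mul_of_nonneg_right hts hθ]

theorem MonotoneOn.eventually_forall_Icc_nhdsLT {σ : ℝ → ℝ} {a t₀ : ℝ} {p : ℝ → Prop}
    (hσ : MonotoneOn σ (Icc a t₀)) (ha : a < t₀) (hlc : ContinuousWithinAt σ (Iio t₀) t₀)
    (hp : ∀ᶠ y in 𝓝 (σ t₀), p y) : ∀ᶠ s in 𝓝[<] t₀, ∀ τ ∈ Icc s t₀, p (σ τ) := by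
  obtain ⟨l, u, ⟨hl, hu⟩, hsub⟩ := mem_nhds_iff_exists_Ioo_subset.1 hp
  filter_upwards [Ioo_mem_nhdsLT ha, hlc.eventually (Ioi_mem_nhds hl)] with s hs hσs τ hτ
  have hτmem : τ ∈ Icc a t₀ := ⟨hs.1.le.trans hτ.1, hτ.2⟩
  exact hsub ⟨hσs.trans_le (hσ ⟨hs.1.le, hs.2.le⟩ hτmem hτ.1),
    (hσ hτmem (right_mem_Icc.2 ha.le) hτ.2).trans_lt hu⟩

section EnergyInequality

variable {E σ : ℝ → ℝ} {c d e t₀ : ℝ}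

theorem eventually_sub_le_mul_sub_of_energy_le (ht₀ : 0 < t₀)
    (hE : ContinuousOn E (Icc c d)) (hder : HasDerivWithinAt E e (Icc c d) (σ t₀))
    (hmono : MonotoneOn σ (Icc 0 t₀)) (hmaps : MapsTo σ (Icc 0 t₀) (Icc c d))
    (hlc : ContinuousWithinAt σ (Iio t₀) t₀)
    (henergy : ∀ s, 0 ≤ s → s < t₀ →
      t₀ ^ 2 * E (σ t₀) + σ t₀ ≤ s ^ 2 * E (σ s) + σ s + 2 * ∫ τ in s..t₀, τ * E (σ τ))
    (hinactive : 0 < 1 + t₀ ^ 2 * e) {ε : ℝ} (hε : 0 < ε) :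
    ∀ᶠ s in 𝓝[<] t₀, σ t₀ - σ s ≤ ε * (t₀ - s) := by
  set κ := 1 + t₀ ^ 2 * e
  set η := κ / (2 * t₀ ^ 2)
  set θ := κ * ε / (8 * t₀)
  have hx : σ t₀ ∈ Icc c d := hmaps ⟨ht₀.le, le_rfl⟩
  have hslope := eventually_nhdsWithin_iff.1
    ((hasDerivWithinAt_iff_isLittleO.1 hder).bound (by positivity : 0 < η))
  have hclose := eventually_nhdsWithin_iff.1
    (Metric.tendsto_nhds.1 (hE _ hx) θ (by positivity))
  filter_upwards [Ioo_mem_nhdsLT ht₀,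
    hmono.eventually_forall_Icc_nhdsLT ht₀ hlc (hslope.and hclose)] with s hs hnear
  have hsub : Icc s t₀ ⊆ Icc 0 t₀ := Icc_subset_Icc_left hs.1.le
  have hσs : σ s ≤ σ t₀ := hmono ⟨hs.1.le, hs.2.le⟩ ⟨ht₀.le, le_rfl⟩ hs.2.le
  have hnear' : ∀ τ ∈ Icc s t₀, |E (σ τ) - E (σ t₀)| < θ := fun τ hτ =>
    (hnear τ hτ).2 (hmaps (hsub hτ))
  have hosc : ∀ τ ∈ Icc s t₀, E (σ τ) ≤ E (σ s) + 2 * θ := fun τ hτ => by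
    linarith [abs_lt.1 (hnear' τ hτ), abs_lt.1 (hnear' s ⟨le_rfl, hs.2.le⟩)]
  have hderiv := (hnear s ⟨le_rfl, hs.2.le⟩).1 (hmaps (hsub ⟨le_rfl, hs.2.le⟩))
  rw [Real.norm_eq_abs, Real.norm_eq_abs, smul_eq_mul, abs_sub_comm (σ s),
    abs_of_nonneg (sub_nonneg.2 hσs)] at hderiv
  have key := sub_le_of_energy_le (u := σ) (F := fun τ => E (σ τ)) (k := e - η) hs.1.le hs.2
    (henergy s hs.1.le hs.2)
    (hE.intervalIntegrable_comp_monotoneOn hs.2.le (hmono.mono hsub) (hmaps.mono_left hsub))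
    hosc (by linarith [(abs_le.1 hderiv).2])
  have hκη : 1 + t₀ ^ 2 * (e - η) = κ / 2 := by simp only [η, κ]; field_simp; ring
  have hκθ : 2 * t₀ * (2 * θ) = κ / 2 * ε := by simp only [θ]; field_simp; ring
  rw [hκη, hκθ, mul_assoc] at key
  exact le_of_mul_le_mul_left key (half_pos hinactive)

theorem tendsto_slope_nhdsLT_zero_of_energy_le (ht₀ : 0 < t₀)
    (hE : ContinuousOn E (Icc c d)) (hder : HasDerivWithinAt E e (Icc c d) (σ t₀))
    (hmono : MonotoneOn σ (Icc 0 t₀)) (hmaps : MapsTo σ (Icc 0 t₀) (Icc c d))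
    (hlc : ContinuousWithinAt σ (Iio t₀) t₀)
    (henergy : ∀ s, 0 ≤ s → s < t₀ →
      t₀ ^ 2 * E (σ t₀) + σ t₀ ≤ s ^ 2 * E (σ s) + σ s + 2 * ∫ τ in s..t₀, τ * E (σ τ))
    (hinactive : 0 < 1 + t₀ ^ 2 * e) :
    Tendsto (fun s => (σ t₀ - σ s) / (t₀ - s)) (𝓝[<] t₀) (𝓝 0) := by
  refine tendsto_order.2 ⟨fun b hb => ?_, fun b hb => ?_⟩
  · filter_upwards [Ioo_mem_nhdsLT ht₀] with s hs
    exact hb.trans_le (div_nonneg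
      (sub_nonneg.2 (hmono ⟨hs.1.le, hs.2.le⟩ ⟨ht₀.le, le_rfl⟩ hs.2.le)) (sub_pos.2 hs.2).le)
  · filter_upwards [self_mem_nhdsWithin, eventually_sub_le_mul_sub_of_energy_le ht₀ hE hder
      hmono hmaps hlc henergy hinactive (half_pos hb)] with s (hs : s < t₀) hle
    rw [div_lt_iff₀ (sub_pos.2 hs)]
    nlinarith [sub_pos.2 hs]

end EnergyInequality

theorem one_add_sq_mul_neg_of_lt {t₀ t e e' : ℝ} (ht₀ : 0 < t₀) (ht : t₀ < t)
    (hactive : 1 + t₀ ^ 2 * e ≤ 0) (he' : e' ≤ e) : 1 + t ^ 2 * e' < 0 := by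
  have he : e < 0 := by nlinarith
  have hsq : t₀ ^ 2 < t ^ 2 := by gcongr
  nlinarith [mul_le_mul_of_nonneg_left he' (sq_nonneg t)]

theorem evolution_escapes_concavity_interval_general
    (T σ₀ σmax a b : ℝ)
    (E : ℝ → ℝ) (hE : ContinuousOn E (Icc σ₀ σmax))
    (E' : ℝ → ℝ)
    (hdiff : ∀ x ∈ Icc σ₀ σmax, HasDerivWithinAt E (E' x) (Icc σ₀ σmax) x)
    (hE'anti : StrictAntiOn E' (Ioo a b))
    (σ : ℝ → ℝ)
    (hmap : ∀ t ∈ Icc (0:ℝ) T, σ t ∈ Icc σ₀ σmax)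
    (hlc : ∀ t ∈ Ioc (0:ℝ) T, ContinuousWithinAt σ (Iio t) t)
    (ha' : ∀ t ∈ Icc (0:ℝ) T, 0 ≤ 1 + t ^ 2 * E' (σ t))
    (hb' : MonotoneOn σ (Icc 0 T))
    (hc' : ∀ s t : ℝ, 0 ≤ s → s < t → t ≤ T →
      t ^ 2 * E (σ t) + σ t ≤ s ^ 2 * E (σ s) + σ s + 2 * ∫ τ in s..t, τ * E (σ τ))
    (t₀ : ℝ) (ht₀ : t₀ ∈ Ioc 0 T)
    (hpos : 0 < Filter.limsup (fun s => (((σ t₀ - σ s) / (t₀ - s) : ℝ) : EReal))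
      (nhdsWithin t₀ (Iio t₀)))
    (hσt₀ : σ t₀ ∈ Ioo a b) :
    ∀ t ∈ Ioc t₀ T, σ t ∉ Ioo a b := by
  have hsub : Icc 0 t₀ ⊆ Icc 0 T := Icc_subset_Icc_right ht₀.2
  have ht₀mem : t₀ ∈ Icc 0 T := Ioc_subset_Icc_self ht₀
  have hactive : 1 + t₀ ^ 2 * E' (σ t₀) ≤ 0 := by
    by_contra! hinactive
    have hslope := tendsto_slope_nhdsLT_zero_of_energy_le ht₀.1 hE (hdiff _ (hmap t₀ ht₀mem))
      (hb'.mono hsub) (fun t ht => hmap t (hsub ht)) (hlc t₀ ht₀)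
      (fun s hs hst => hc' s t₀ hs hst ht₀.2) hinactive
    have hlim : Tendsto (fun s => (((σ t₀ - σ s) / (t₀ - s) : ℝ) : EReal)) (𝓝[<] t₀)
        (𝓝 ((0 : ℝ) : EReal)) := (continuous_coe_real_ereal.tendsto 0).comp hslope
    rw [hlim.limsup_eq, EReal.coe_zero] at hpos
    exact hpos.false
  intro t ht hσt
  have htmem : t ∈ Icc 0 T := ⟨ht₀.1.le.trans ht.1.le, ht.2⟩
  have hE'le : E' (σ t) ≤ E' (σ t₀) := hE'anti.antitoneOn hσt₀ hσt (hb' ht₀mem htmem ht.1.le)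
  exact (ha' t htmem).not_gt (one_add_sq_mul_neg_of_lt ht₀.1 ht.1 hactive hE'le)

/-- Remark 5.3: once the evolution is moving inside a strict concavity interval of the
energy, it can never again take values in that interval. -/
theorem evolution_escapes_concavity_interval
    (T σ₀ σmax a b : ℝ) (hT : 0 < T) (h0 : 0 ≤ σ₀) (h1 : σ₀ < σmax)
    (hab : Ioo a b ⊆ Icc σ₀ σmax)
    (E : ℝ → ℝ) (hE : ContinuousOn E (Icc σ₀ σmax))
    (E' : ℝ → ℝ)
    (hdiff : ∀ x ∈ Icc σ₀ σmax, HasDerivWithinAt E (E' x) (Icc σ₀ σmax) x)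
    (hE'anti : StrictAntiOn E' (Ioo a b))
    (σ : ℝ → ℝ)
    (hmap : ∀ t ∈ Icc (0:ℝ) T, σ t ∈ Icc σ₀ σmax)
    (hlc : ∀ t ∈ Ioc (0:ℝ) T, ContinuousWithinAt σ (Iio t) t)
    (ha' : ∀ t ∈ Icc (0:ℝ) T, 0 ≤ 1 + t ^ 2 * E' (σ t))
    (hb' : MonotoneOn σ (Icc 0 T))
    (hc' : ∀ s t : ℝ, 0 ≤ s → s < t → t ≤ T →
      t ^ 2 * E (σ t) + σ t ≤ s ^ 2 * E (σ s) + σ s + 2 * ∫ τ in s..t, τ * E (σ τ))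
    (t₀ : ℝ) (ht₀ : t₀ ∈ Ioc 0 T)
    (hpos : 0 < Filter.limsup (fun s => (((σ t₀ - σ s) / (t₀ - s) : ℝ) : EReal))
      (nhdsWithin t₀ (Iio t₀)))
    (hσt₀ : σ t₀ ∈ Ioo a b) :
    ∀ t ∈ Ioc t₀ T, σ t ∉ Ioo a b :=
  evolution_escapes_concavity_interval_general T σ₀ σmax a b E hE E' hdiff hE'anti σ hmap hlc ha'
    hb' hc' t₀ ht₀ hpos hσt₀
end

section
/- Fix T > 0 and 0 ≤ σ₀ < σ̄. Let E : [σ₀,σ̄] → ℝ be continuous, differentiable and strictly convex on an interval (a,σ̄) with σ₀ ≤ a < σ̄. Let σ : [0,T] → [σ₀,σ̄) be left-continuous and satisfy conditions (b′) and (c′). If t ∈ (0,T) is such that σ(t) ∈ (a,σ̄) and 1 + t²·E′(σ(t)) ≥ 0, then σ is right-continuous (hence continuous) at t, i.e. lim_{s→t⁺} σ(s) = σ(t). -/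
/-!
Let `L` be the right limit of `σ` at `t`, which exists since `σ` is monotone. Letting `s ↓ t` in
`(c′)` and using that `E` is bounded, so that the integral vanishes in the limit, gives
`t² E(L) + L ≤ t² E(σ(t)) + σ(t)`. If `σ(t) < L`, strict convexity puts the slope of `E` between
`σ(t)` and `L` strictly above `E′(σ(t))`, and the energy inequality puts it at most `-1/t²`,
contradicting the stability condition `1 + t² E′(σ(t)) ≥ 0`.
-/

open Set Filter Topology

lemma MonotoneOn.exists_tendsto_nhdsGT {α β : Type*} [LinearOrder α] [TopologicalSpace α]
    [OrderTopology α] [DenselyOrdered α] [NoMaxOrder α] [ConditionallyCompleteLinearOrder β]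
    [TopologicalSpace β] [OrderTopology β] {f : α → β} {a b t : α}
    (hf : MonotoneOn f (Icc a b)) (ht : t ∈ Ico a b) :
    ∃ L, Tendsto f (𝓝[>] t) (𝓝 L) ∧ f t ≤ L ∧ ∀ u ∈ Ioc t b, L ≤ f u := by
  have hmem : ∀ {u}, u ∈ Ioc t b → u ∈ Icc a b := fun hu => ⟨ht.1.trans hu.1.le, hu.2⟩
  have htIcc : t ∈ Icc a b := Ico_subset_Icc_self ht
  have hL := (hf.mono fun u hu => hmem (Ioo_subset_Ioc_self hu)).tendsto_nhdsWithin_Ioo_right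
    (nonempty_Ioo.2 ht.2) ⟨f t, forall_mem_image.2 fun u hu => hf htIcc (hmem ⟨hu.1, hu.2.le⟩) hu.1.le⟩
  refine ⟨_, hL, ge_of_tendsto hL ?_, fun u hu => le_of_tendsto hL ?_⟩
  · filter_upwards [Ioo_mem_nhdsGT ht.2] with v hv
    exact hf htIcc (hmem ⟨hv.1, hv.2.le⟩) hv.1.le
  · filter_upwards [Ioo_mem_nhdsGT hu.1] with v hv
    exact hf (hmem ⟨hv.1, hv.2.le.trans hu.2⟩) (hmem hu) hv.2.le

lemma tendsto_intervalIntegral_nhdsGT_zero {F : Type*} [NormedAddCommGroup F] [NormedSpace ℝ F]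
    {g : ℝ → F} {t b C : ℝ} (htb : t < b) (hg : ∀ x ∈ Ioc t b, ‖g x‖ ≤ C) :
    Tendsto (fun u => ∫ τ in t..u, g τ) (𝓝[>] t) (𝓝 0) := by
  refine squeeze_zero_norm' (a := fun u => C * |u - t|) ?_ ?_
  · filter_upwards [Ioo_mem_nhdsGT htb] with u hu
    refine intervalIntegral.norm_integral_le_of_norm_le_const fun x hx => hg x ?_
    rw [uIoc_of_le hu.1.le] at hx
    exact ⟨hx.1, hx.2.trans hu.2.le⟩
  · refine tendsto_nhdsWithin_of_tendsto_nhds ?_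
    simpa using (by fun_prop : Continuous fun u : ℝ => C * |u - t|).tendsto t

lemma tendsto_sq_mul_comp_add_nhdsGT {E σ : ℝ → ℝ} {S : Set ℝ} {t L : ℝ}
    (hE : ContinuousWithinAt E S L) (hσ : Tendsto σ (𝓝[>] t) (𝓝 L))
    (hσS : ∀ᶠ u in 𝓝[>] t, σ u ∈ S) :
    Tendsto (fun u => u ^ 2 * E (σ u) + σ u) (𝓝[>] t) (𝓝 (t ^ 2 * E L + L)) :=
  ((tendsto_nhdsWithin_of_tendsto_nhds ((continuous_pow 2).tendsto t)).mul
    (hE.tendsto.comp (tendsto_nhdsWithin_iff.2 ⟨hσ, hσS⟩))).add hσ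

lemma StrictConvexOn.le_of_energy_le {S : Set ℝ} {E : ℝ → ℝ} {c L e k : ℝ}
    (hE : StrictConvexOn ℝ S E) (hc : c ∈ S) (hL : L ∈ S) (hd : HasDerivWithinAt E e S c)
    (hk : 0 ≤ k) (hstab : 0 ≤ 1 + k * e) (henergy : k * E L + L ≤ k * E c + c) : L ≤ c := by
  by_contra! hcL
  have hslope : e * (L - c) < E L - E c := by
    have := hE.lt_slope_of_hasDerivWithinAt hc hL hcL hd
    rwa [slope_def_field, lt_div_iff₀ (sub_pos.2 hcL)] at this
  rcases hk.eq_or_lt with rfl | hk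
  · linarith
  · nlinarith [mul_nonneg hstab (sub_pos.2 hcL).le, mul_lt_mul_of_pos_left hslope hk]

theorem no_jump_in_convexity_interval_general
    (T σ₀ σmax a : ℝ)
    (E : ℝ → ℝ) (hE : ContinuousOn E (Icc σ₀ σmax))
    (E' : ℝ → ℝ)
    (hdiff : ∀ x ∈ Ioo a σmax, HasDerivWithinAt E (E' x) (Ioo a σmax) x)
    (hconv : StrictConvexOn ℝ (Ioo a σmax) E)
    (σ : ℝ → ℝ)
    (hmap : ∀ t ∈ Icc (0:ℝ) T, σ t ∈ Ico σ₀ σmax)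
    (hb' : MonotoneOn σ (Icc 0 T))
    (hc' : ∀ s t : ℝ, 0 ≤ s → s < t → t ≤ T →
      t ^ 2 * E (σ t) + σ t ≤ s ^ 2 * E (σ s) + σ s + 2 * ∫ τ in s..t, τ * E (σ τ))
    (t : ℝ) (ht : t ∈ Ioo 0 T)
    (hσt : σ t ∈ Ioo a σmax)
    (hstab : 0 ≤ 1 + t ^ 2 * E' (σ t)) :
    Filter.Tendsto σ (nhdsWithin t (Ioi t)) (nhds (σ t)) := by
  obtain ⟨ht0, htT⟩ := ht
  have hIcc : ∀ u ∈ Ioc t T, σ u ∈ Icc σ₀ σmax := fun u hu =>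
    Ico_subset_Icc_self (hmap u ⟨ht0.le.trans hu.1.le, hu.2⟩)
  have hnear : ∀ᶠ u in 𝓝[>] t, u ∈ Ioc t T :=
    mem_of_superset (Ioo_mem_nhdsGT htT) Ioo_subset_Ioc_self
  obtain ⟨L, hL, hσL, hLσ⟩ := hb'.exists_tendsto_nhdsGT ⟨ht0.le, htT⟩
  have hLlt : L < σmax := (hLσ T ⟨htT, le_rfl⟩).trans_lt (hmap T ⟨(ht0.trans htT).le, le_rfl⟩).2
  obtain ⟨M, hM⟩ := isCompact_Icc.exists_bound_of_continuousOn hE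
  have hint : Tendsto (fun u => ∫ τ in t..u, τ * E (σ τ)) (𝓝[>] t) (𝓝 0) := by
    refine tendsto_intervalIntegral_nhdsGT_zero (C := T * M) htT fun x hx => ?_
    rw [norm_mul, Real.norm_of_nonneg (ht0.trans hx.1).le]
    exact mul_le_mul hx.2 (hM _ (hIcc x hx)) (norm_nonneg _) (ht0.trans htT).le
  have henergy : t ^ 2 * E L + L ≤ t ^ 2 * E (σ t) + σ t := by
    have hlhs := tendsto_sq_mul_comp_add_nhdsGT
      (hE L ⟨(hmap t ⟨ht0.le, htT.le⟩).1.trans hσL, hLlt.le⟩) hL (hnear.mono hIcc)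
    have hrhs := (hint.const_mul 2).const_add (t ^ 2 * E (σ t) + σ t)
    rw [mul_zero, add_zero] at hrhs
    refine le_of_tendsto_of_tendsto hlhs hrhs ?_
    filter_upwards [hnear] with u hu using hc' t u ht0.le hu.1 hu.2
  have hLσt : L = σ t := le_antisymm (hconv.le_of_energy_le hσt ⟨hσt.1.trans_le hσL, hLlt⟩
    (hdiff _ hσt) (sq_nonneg t) hstab henergy) hσL
  exact hLσt ▸ hL

/-- Proposition 5.5: the crack length cannot jump while inside a strict convexity
interval of the energy. -/
theorem no_jump_in_convexity_interval
    (T σ₀ σmax a : ℝ) (hT : 0 < T) (h0 : 0 ≤ σ₀) (h1 : σ₀ < σmax)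
    (ha : σ₀ ≤ a) (ha' : a < σmax)
    (E : ℝ → ℝ) (hE : ContinuousOn E (Icc σ₀ σmax))
    (E' : ℝ → ℝ)
    (hdiff : ∀ x ∈ Ioo a σmax, HasDerivWithinAt E (E' x) (Ioo a σmax) x)
    (hconv : StrictConvexOn ℝ (Ioo a σmax) E)
    (σ : ℝ → ℝ)
    (hmap : ∀ t ∈ Icc (0:ℝ) T, σ t ∈ Ico σ₀ σmax)
    (hlc : ∀ t ∈ Ioc (0:ℝ) T, ContinuousWithinAt σ (Iio t) t)
    (hb' : MonotoneOn σ (Icc 0 T))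
    (hc' : ∀ s t : ℝ, 0 ≤ s → s < t → t ≤ T →
      t ^ 2 * E (σ t) + σ t ≤ s ^ 2 * E (σ s) + σ s + 2 * ∫ τ in s..t, τ * E (σ τ))
    (t : ℝ) (ht : t ∈ Ioo 0 T)
    (hσt : σ t ∈ Ioo a σmax)
    (hstab : 0 ≤ 1 + t ^ 2 * E' (σ t)) :
    Filter.Tendsto σ (nhdsWithin t (Ioi t)) (nhds (σ t)) :=
  no_jump_in_convexity_interval_general T σ₀ σmax a E hE E' hdiff hconv σ hmap hb' hc' t ht hσt
    hstab
end

section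
/- Fix T > 0 and 0 ≤ σ₀ < σ̄. Let E : [σ₀,σ̄] → ℝ be nonincreasing and let σ : [0,T] → [σ₀,σ̄] be nondecreasing and satisfy condition (c′). Then for all 0 ≤ s < t ≤ T, t²·E(σ(t)) + σ(t) ≤ t²·E(σ(s)) + σ(s). -/
open Set

/-- Section 5: the energy inequality (c′) implies the Francfort–Marigo
unilateral minimality-in-time condition (iii). -/
theorem energy_inequality_implies_condition_iii
    (T σ₀ σmax : ℝ) (hT : 0 < T) (h0 : 0 ≤ σ₀) (h1 : σ₀ < σmax)
    (E : ℝ → ℝ) (hEmono : AntitoneOn E (Icc σ₀ σmax))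
    (σ : ℝ → ℝ)
    (hmap : ∀ t ∈ Icc (0:ℝ) T, σ t ∈ Icc σ₀ σmax)
    (hmono : MonotoneOn σ (Icc 0 T))
    (hc' : ∀ s t : ℝ, 0 ≤ s → s < t → t ≤ T →
      t ^ 2 * E (σ t) + σ t ≤ s ^ 2 * E (σ s) + σ s + 2 * ∫ τ in s..t, τ * E (σ τ)) :
    ∀ s t : ℝ, 0 ≤ s → s < t → t ≤ T →
      t ^ 2 * E (σ t) + σ t ≤ t ^ 2 * E (σ s) + σ s := by
  intro s t hs hst htT
  have hsub : Icc s t ⊆ Icc (0:ℝ) T := Icc_subset_Icc hs htT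
  have hanti : AntitoneOn (fun τ => E (σ τ)) (Icc s t) := fun x hx y hy hxy =>
    hEmono (hmap x (hsub hx)) (hmap y (hsub hy)) (hmono (hsub hx) (hsub hy) hxy)
  have hint1 : IntervalIntegrable (fun τ => E (σ τ)) MeasureTheory.volume s t := by
    apply AntitoneOn.intervalIntegrable
    rwa [uIcc_of_le hst.le]
  have hint : IntervalIntegrable (fun τ => τ * E (σ τ)) MeasureTheory.volume s t :=
    hint1.continuousOn_mul continuousOn_id
  have hle : (∫ τ in s..t, τ * E (σ τ)) ≤ ∫ τ in s..t, τ * E (σ s) := by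
    apply intervalIntegral.integral_mono_on hst.le hint
    · exact (continuous_id.mul continuous_const).intervalIntegrable s t
    · intro x hx
      have h1 : E (σ x) ≤ E (σ s) := hanti (left_mem_Icc.mpr hst.le) hx hx.1
      exact mul_le_mul_of_nonneg_left h1 (le_trans hs hx.1)
  have hval : (∫ τ in s..t, τ * E (σ s)) = (t ^ 2 - s ^ 2) / 2 * E (σ s) := by
    rw [intervalIntegral.integral_mul_const, integral_id]
  have h := hc' s t hs hst htT
  nlinarith [hle, hval, h]
end

section
/- Let V be a real Hilbert space, let T > 0, and let F : ℝ × V × ℝ → ℝ be continuously Fréchet differentiable. Let v : [0,T] → V be differentiable and let σ : [0,T] → ℝ be nondecreasing. Assume: (1) for every t ∈ [0,T], the partial Fréchet differential of F with respect to its second argument vanishes at (t, v(t), σ(t)), i.e. D_vF(t,v(t),σ(t)) = 0; (2) for every t ∈ [0,T], ∂_σF(t,v(t),σ(t)) ≥ 0; (3) for all 0 ≤ s < t ≤ T, F(t,v(t),σ(t)) ≤ F(s,v(s),σ(s)) + ∫_s^t ∂_τF(τ,v(τ),σ(τ)) dτ. Then at every t ∈ (0,T) at which σ is differentiable (hence at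 almost every t), ∂_σF(t,v(t),σ(t))·σ′(t) = 0. -/
open Set Filter Topology MeasureTheory

/-!
At a point `t` where `σ` is differentiable, the chain rule and the stability condition `D_vF = 0`
give `d/dt F(t, v t, σ t) = ∂_tF + ∂_σF · σ'(t)`. Comparing the energy inequality on `[t, u]` with
its trivial case `u = t` and letting `u ↓ t` bounds this derivative by `∂_tF`, so
`∂_σF · σ'(t) ≤ 0`. Both factors are nonnegative, by the second stability condition and by the
monotonicity of `σ`, hence the product vanishes.
-/

theorem HasDerivAt.nonneg_of_le_of_mem_Ioc {f : ℝ → ℝ} {f' x b : ℝ} (hf : HasDerivAt f f' x)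
    (hxb : x < b) (h : ∀ y ∈ Ioc x b, f x ≤ f y) : 0 ≤ f' := by
  refine ge_of_tendsto hf.tendsto_slope_zero_right ?_
  filter_upwards [Ioc_mem_nhdsGT (sub_pos.2 hxb)] with s hs
  have := h (x + s) ⟨by linarith [hs.1], by linarith [hs.2]⟩
  exact smul_nonneg (inv_nonneg.2 hs.1.le) (sub_nonneg.2 this)

theorem HasDerivAt.le_of_le_add_integral {f g : ℝ → ℝ} {f' t b : ℝ} (hf : HasDerivAt f f' t)
    (hg : HasDerivAt (fun u => ∫ τ in t..u, g τ) (g t) t) (htb : t < b)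
    (h : ∀ u ∈ Ioc t b, f u ≤ f t + ∫ τ in t..u, g τ) : f' ≤ g t := by
  have hψ := ((hasDerivAt_const t (f t)).add hg).sub hf
  have := hψ.nonneg_of_le_of_mem_Ioc htb fun u hu => by
    simp only [Pi.sub_apply, Pi.add_apply, intervalIntegral.integral_same, add_zero, sub_self,
      sub_nonneg]
    linarith [h u hu]
  linarith

section PartialDerivatives

variable {X E : Type*} [NormedAddCommGroup X] [NormedSpace ℝ X]
  [NormedAddCommGroup E] [NormedSpace ℝ E]

theorem hasDerivAt_partial_fst {G : ℝ × X → ℝ} {t : ℝ} {x : X}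
    (hG : DifferentiableAt ℝ G (t, x)) :
    HasDerivAt (fun r => G (r, x)) (fderiv ℝ G (t, x) (1, 0)) t :=
  hG.hasFDerivAt.comp_hasDerivAt t ((hasDerivAt_id t).prodMk (hasDerivAt_const t x))

theorem continuous_deriv_partial_fst {G : ℝ × X → ℝ} (hG : ContDiff ℝ 1 G) :
    Continuous fun p : ℝ × X => deriv (fun r => G (r, p.2)) p.1 := by
  have hdiff := hG.differentiable one_ne_zero
  simp_rw [fun p : ℝ × X => (hasDerivAt_partial_fst (hdiff p)).deriv]
  exact (hG.continuous_fderiv one_ne_zero).clm_apply continuous_const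

variable {G : ℝ × E × ℝ → ℝ} {t s : ℝ} {w : E}

theorem hasFDerivAt_partial_snd_fst (hG : DifferentiableAt ℝ G (t, w, s)) :
    HasFDerivAt (fun x => G (t, x, s))
      ((fderiv ℝ G (t, w, s)).comp ((0 : E →L[ℝ] ℝ).prod ((ContinuousLinearMap.id ℝ E).prod 0)))
      w :=
  hG.hasFDerivAt.comp w
    ((hasFDerivAt_const t w).prodMk ((hasFDerivAt_id w).prodMk (hasFDerivAt_const s w)))

theorem hasDerivAt_partial_snd_snd (hG : DifferentiableAt ℝ G (t, w, s)) :
    HasDerivAt (fun x => G (t, w, x)) (fderiv ℝ G (t, w, s) (0, 0, 1)) s :=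
  hG.hasFDerivAt.comp_hasDerivAt s
    ((hasDerivAt_const s t).prodMk ((hasDerivAt_const s w).prodMk (hasDerivAt_id s)))

theorem hasDerivAt_comp_path {v : ℝ → E} {σ : ℝ → ℝ} {v' : E} {d : ℝ}
    (hG : DifferentiableAt ℝ G (t, v t, σ t)) (hv : HasDerivAt v v' t) (hσ : HasDerivAt σ d t) :
    HasDerivAt (fun r => G (r, v r, σ r))
      (deriv (fun r => G (r, v t, σ t)) t + fderiv ℝ (fun x => G (t, x, σ t)) (v t) v'
        + deriv (fun x => G (t, v t, x)) (σ t) * d) t := by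
  have hγ := hG.hasFDerivAt.comp_hasDerivAt t ((hasDerivAt_id t).prodMk (hv.prodMk hσ))
  rw [(hasDerivAt_partial_fst hG).deriv, (hasFDerivAt_partial_snd_fst hG).fderiv,
    (hasDerivAt_partial_snd_snd hG).deriv]
  refine hγ.congr_deriv ?_
  rw [ContinuousLinearMap.comp_apply, mul_comm, ← smul_eq_mul, ← map_smul, ← map_add, ← map_add]
  congr 1
  simp

end PartialDerivatives

theorem hasDerivAt_integral_comp_path {E Y : Type*} [NormedAddCommGroup E] [NormedSpace ℝ E]
    [NormedAddCommGroup Y] [NormedSpace ℝ Y] [CompleteSpace Y]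
    {φ : ℝ × E × ℝ → Y} {v : ℝ → E} {σ : ℝ → ℝ} {a b t : ℝ} (hφ : Continuous φ)
    (hv : ContinuousOn v (Icc a b)) (hσ : MonotoneOn σ (Icc a b)) (ht : t ∈ Ioo a b)
    (hσt : ContinuousAt σ t) :
    HasDerivAt (fun u => ∫ τ in t..u, φ (τ, v τ, σ τ)) (φ (t, v t, σ t)) t := by
  have hγ : AEStronglyMeasurable (fun τ => (τ, v τ, σ τ)) (volume.restrict (Icc a b)) :=
    aestronglyMeasurable_id.prodMk ((hv.aestronglyMeasurable measurableSet_Icc).prodMk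
      (aemeasurable_restrict_of_monotoneOn measurableSet_Icc hσ).aestronglyMeasurable)
  have hvt : ContinuousAt v t := hv.continuousAt (Icc_mem_nhds ht.1 ht.2)
  exact intervalIntegral.integral_hasDerivAt_right IntervalIntegrable.refl
    ⟨Icc a b, Icc_mem_nhds ht.1 ht.2, hφ.comp_aestronglyMeasurable hγ⟩
    (hφ.continuousAt.comp (continuousAt_id.prodMk (hvt.prodMk hσt)))

theorem griffith_criterion_general
    {V : Type*} [NormedAddCommGroup V] [InnerProductSpace ℝ V]
    (T : ℝ)
    (F : ℝ → V → ℝ → ℝ)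
    (hF : ContDiff ℝ 1 (fun p : ℝ × V × ℝ => F p.1 p.2.1 p.2.2))
    (v : ℝ → V) (σ : ℝ → ℝ)
    (hv : ∀ t ∈ Icc (0:ℝ) T, DifferentiableAt ℝ v t)
    (hσmono : MonotoneOn σ (Icc 0 T))
    (hstab1 : ∀ t ∈ Icc (0:ℝ) T, fderiv ℝ (fun w => F t w (σ t)) (v t) = 0)
    (hstab2 : ∀ t ∈ Icc (0:ℝ) T, 0 ≤ deriv (fun s => F t (v t) s) (σ t))
    (henergy : ∀ s t : ℝ, 0 ≤ s → s < t → t ≤ T →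
      F t (v t) (σ t) ≤ F s (v s) (σ s)
        + ∫ τ in s..t, deriv (fun r => F r (v τ) (σ τ)) τ) :
    ∀ t ∈ Ioo (0:ℝ) T, ∀ d : ℝ, HasDerivAt σ d t →
      deriv (fun s => F t (v t) s) (σ t) * d = 0 := by
  intro t ht d hd
  have htT : t ∈ Icc 0 T := Ioo_subset_Icc_self ht
  have hd_nonneg : 0 ≤ d := hd.nonneg_of_le_of_mem_Ioc ht.2 fun u hu =>
    hσmono htT ⟨ht.1.le.trans hu.1.le, hu.2⟩ hu.1.le
  have hE : HasDerivAt (fun r => F r (v r) (σ r))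
      (deriv (fun r => F r (v t) (σ t)) t + fderiv ℝ (fun w => F t w (σ t)) (v t) (deriv v t)
        + deriv (fun s => F t (v t) s) (σ t) * d) t :=
    hasDerivAt_comp_path (hF.differentiable one_ne_zero _) (hv t htT).hasDerivAt hd
  have hpower := hE.le_of_le_add_integral
    (hasDerivAt_integral_comp_path (φ := fun p => deriv (fun r => F r p.2.1 p.2.2) p.1)
      (continuous_deriv_partial_fst hF)
      (fun u hu => (hv u hu).continuousAt.continuousWithinAt) hσmono ht hd.continuousAt)
    ht.2 fun u hu => henergy t u ht.1.le hu.1 hu.2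
  rw [hstab1 t htT, zero_apply, add_zero] at hpower
  exact le_antisymm (by linarith) (mul_nonneg (hstab2 t htT) hd_nonneg)

/-- Proposition 3.2 (abstract form): along an irreversible quasistatic evolution
(local unilateral stability + energy inequality), Griffith's criterion
`∂_σF(t,v(t),σ(t))·σ̇(t) = 0` holds at every differentiability point of `σ`. -/
theorem griffith_criterion
    {V : Type*} [NormedAddCommGroup V] [InnerProductSpace ℝ V] [CompleteSpace V]
    (T : ℝ) (hT : 0 < T)
    (F : ℝ → V → ℝ → ℝ)
    (hF : ContDiff ℝ 1 (fun p : ℝ × V × ℝ => F p.1 p.2.1 p.2.2))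
    (v : ℝ → V) (σ : ℝ → ℝ)
    (hv : ∀ t ∈ Icc (0:ℝ) T, DifferentiableAt ℝ v t)
    (hσmono : MonotoneOn σ (Icc 0 T))
    (hstab1 : ∀ t ∈ Icc (0:ℝ) T, fderiv ℝ (fun w => F t w (σ t)) (v t) = 0)
    (hstab2 : ∀ t ∈ Icc (0:ℝ) T, 0 ≤ deriv (fun s => F t (v t) s) (σ t))
    (henergy : ∀ s t : ℝ, 0 ≤ s → s < t → t ≤ T →
      F t (v t) (σ t) ≤ F s (v s) (σ s)
        + ∫ τ in s..t, deriv (fun r => F r (v τ) (σ τ)) τ) :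
    ∀ t ∈ Ioo (0:ℝ) T, ∀ d : ℝ, HasDerivAt σ d t →
      deriv (fun s => F t (v t) s) (σ t) * d = 0 :=
  griffith_criterion_general T F hF v σ hv hσmono hstab1 hstab2 henergy
end

section
/- Let V be a real Hilbert space, T > 0, ε > 0, let F : ℝ × V × ℝ → ℝ be continuously Fréchet differentiable, and let λ : ℝ → ℝ be continuous with λ(s) > 0 for all s. Let v : [0,T] → V and σ : [0,T] → ℝ be continuously differentiable and satisfy, for every t ∈ [0,T]: ε·⟨v̇(t), w⟩ = −D_vF(t,v(t),σ(t))(w) for all w ∈ V, and ε·σ̇(t) = max(−∂_σF(t,v(t),σ(t)), 0)·λ(σ(t)). Then for all 0 ≤ s < t ≤ T: ε·∫_s^t ‖v̇(τ)‖² dτ + ε·∫_s^t σ̇(τ)²/λ(σ(τ)) dτ + F(t,v(t),σ(t)) = F(s,v(s),σ(s)) + ∫_s^t ∂_τF(τ,v(τ),σ(τ)) dτ. -/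
/-!
Along the flow, the chain rule splits the time derivative of `τ ↦ F(τ, v τ, σ τ)` into the
explicit time derivative `∂_τF` plus `D_vF(v̇) + ∂_σF · σ̇`. The `v`-equation tested with
`w = v̇` turns the second term into `-ε‖v̇‖²`; the `σ`-equation turns the third into
`-ε σ̇² / λ(σ)`, since `σ̇ = 0` wherever `∂_σF > 0`. Integrating over `[s, t]` gives the identity.
-/

open Set
open scoped RealInnerProductSpace

section PartialDerivatives

variable {V : Type*} [NormedAddCommGroup V] [NormedSpace ℝ V] {F : ℝ → V → ℝ → ℝ}

theorem hasDerivAt_partial₁ {t : ℝ} {u : V} {r : ℝ}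
    (hF : DifferentiableAt ℝ (fun p : ℝ × V × ℝ => F p.1 p.2.1 p.2.2) (t, u, r)) :
    HasDerivAt (fun t' => F t' u r)
      (fderiv ℝ (fun p : ℝ × V × ℝ => F p.1 p.2.1 p.2.2) (t, u, r) (1, 0, 0)) t :=
  (hF.hasFDerivAt.comp_hasDerivAt t
    ((hasDerivAt_id t).prodMk ((hasDerivAt_const t u).prodMk (hasDerivAt_const t r))) :)

theorem hasFDerivAt_partial₂ {t : ℝ} {u : V} {r : ℝ}
    (hF : DifferentiableAt ℝ (fun p : ℝ × V × ℝ => F p.1 p.2.1 p.2.2) (t, u, r)) :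
    HasFDerivAt (fun u' => F t u' r)
      ((fderiv ℝ (fun p : ℝ × V × ℝ => F p.1 p.2.1 p.2.2) (t, u, r)).comp
        ((0 : V →L[ℝ] ℝ).prod ((ContinuousLinearMap.id ℝ V).prod 0))) u :=
  hF.hasFDerivAt.comp u (f := fun u' => ((t, u', r) : ℝ × V × ℝ))
    ((hasFDerivAt_const t u).prodMk ((hasFDerivAt_id u).prodMk (hasFDerivAt_const r u)))

theorem hasDerivAt_partial₃ {t : ℝ} {u : V} {r : ℝ}
    (hF : DifferentiableAt ℝ (fun p : ℝ × V × ℝ => F p.1 p.2.1 p.2.2) (t, u, r)) :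
    HasDerivAt (fun r' => F t u r')
      (fderiv ℝ (fun p : ℝ × V × ℝ => F p.1 p.2.1 p.2.2) (t, u, r) (0, 0, 1)) r :=
  (hF.hasFDerivAt.comp_hasDerivAt r
    ((hasDerivAt_const r t).prodMk ((hasDerivAt_const r u).prodMk (hasDerivAt_id r))) :)

theorem hasDerivAt_comp_curve_of_partials {v : ℝ → V} {σ : ℝ → ℝ} {v' : V} {σ' τ : ℝ}
    (hF : DifferentiableAt ℝ (fun p : ℝ × V × ℝ => F p.1 p.2.1 p.2.2) (τ, v τ, σ τ))
    (hv : HasDerivAt v v' τ) (hσ : HasDerivAt σ σ' τ) :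
    HasDerivAt (fun r => F r (v r) (σ r))
      (deriv (fun r => F r (v τ) (σ τ)) τ + fderiv ℝ (fun u => F τ u (σ τ)) (v τ) v'
        + deriv (fun r => F τ (v τ) r) (σ τ) * σ') τ := by
  have htotal := hF.hasFDerivAt.comp_hasDerivAt τ ((hasDerivAt_id τ).prodMk (hv.prodMk hσ))
  rw [(hasDerivAt_partial₁ hF).deriv, (hasFDerivAt_partial₂ hF).fderiv,
    (hasDerivAt_partial₃ hF).deriv]
  refine htotal.congr_deriv ?_
  have hsplit : ((1 : ℝ), v', σ')
      = ((1 : ℝ), (0 : V), (0 : ℝ)) + ((0 : ℝ), v', (0 : ℝ)) + σ' • ((0 : ℝ), (0 : V), (1 : ℝ)) := by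
    simp
  rw [hsplit, map_add, map_add, map_smul, smul_eq_mul, mul_comm]
  rfl

theorem ContDiff.continuousOn_comp_partial₁ {v : ℝ → V} {σ : ℝ → ℝ} {s : Set ℝ}
    (hF : ContDiff ℝ 1 (fun p : ℝ × V × ℝ => F p.1 p.2.1 p.2.2))
    (hv : ContinuousOn v s) (hσ : ContinuousOn σ s) :
    ContinuousOn (fun τ => deriv (fun r => F r (v τ) (σ τ)) τ) s := by
  have hcont : ContinuousOn (fun τ =>
      fderiv ℝ (fun p : ℝ × V × ℝ => F p.1 p.2.1 p.2.2) (τ, v τ, σ τ) (1, 0, 0)) s :=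
    ((hF.continuous_fderiv one_ne_zero).comp_continuousOn
      (continuousOn_id.prodMk (hv.prodMk hσ))).clm_apply continuousOn_const
  refine hcont.congr fun τ _ => ?_
  exact (hasDerivAt_partial₁ ((hF.differentiable one_ne_zero) _)).deriv

end PartialDerivatives

theorem mul_eq_neg_of_mul_eq_max_neg_mul {D x ε l : ℝ} (hε : ε ≠ 0) (hl : l ≠ 0)
    (h : ε * x = max (-D) 0 * l) : D * x = -(ε * (x ^ 2 / l)) := by
  rcases le_or_gt D 0 with hD | hD
  · rw [max_eq_left (by linarith)] at h
    field_simp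
    linear_combination x * h
  · rw [max_eq_right (by linarith), zero_mul] at h
    obtain rfl : x = 0 := (mul_eq_zero.mp h).resolve_left hε
    simp

theorem integral_add_integral_add_eq_of_hasDerivAt {f g a b : ℝ → ℝ} {s t : ℝ}
    (hf : ∀ x ∈ uIcc s t, HasDerivAt f (g x - a x - b x) x)
    (hg : IntervalIntegrable g MeasureTheory.volume s t)
    (ha : IntervalIntegrable a MeasureTheory.volume s t)
    (hb : IntervalIntegrable b MeasureTheory.volume s t) :
    (∫ x in s..t, a x) + (∫ x in s..t, b x) + f t = f s + ∫ x in s..t, g x := by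
  have hFTC := intervalIntegral.integral_eq_sub_of_hasDerivAt hf ((hg.sub ha).sub hb)
  rw [intervalIntegral.integral_sub (hg.sub ha) hb, intervalIntegral.integral_sub hg ha] at hFTC
  linarith

theorem epsilon_gradient_flow_energy_estimate_general
    {V : Type*} [NormedAddCommGroup V] [InnerProductSpace ℝ V]
    (T ε : ℝ) (hε : 0 < ε)
    (F : ℝ → V → ℝ → ℝ)
    (hF : ContDiff ℝ 1 (fun p : ℝ × V × ℝ => F p.1 p.2.1 p.2.2))
    (lam : ℝ → ℝ) (hlamcont : Continuous lam) (hlampos : ∀ s : ℝ, 0 < lam s)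
    (v : ℝ → V) (v' : ℝ → V) (σ σ' : ℝ → ℝ)
    (hv : ∀ t ∈ Icc (0:ℝ) T, HasDerivAt v (v' t) t)
    (hv' : ContinuousOn v' (Icc 0 T))
    (hσ : ∀ t ∈ Icc (0:ℝ) T, HasDerivAt σ (σ' t) t)
    (hσ' : ContinuousOn σ' (Icc 0 T))
    (heqv : ∀ t ∈ Icc (0:ℝ) T, ∀ w : V,
      ε * ⟪v' t, w⟫ = -(fderiv ℝ (fun u => F t u (σ t)) (v t)) w)
    (heqσ : ∀ t ∈ Icc (0:ℝ) T,
      ε * σ' t = max (-(deriv (fun s => F t (v t) s) (σ t))) 0 * lam (σ t)) :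
    ∀ s t : ℝ, 0 ≤ s → s < t → t ≤ T →
      ε * (∫ τ in s..t, ‖v' τ‖ ^ 2) + ε * (∫ τ in s..t, (σ' τ) ^ 2 / lam (σ τ))
        + F t (v t) (σ t)
      = F s (v s) (σ s) + ∫ τ in s..t, deriv (fun r => F r (v τ) (σ τ)) τ := by
  intro s t hs hst htT
  have hsub : uIcc s t ⊆ Icc 0 T := by
    rw [uIcc_of_le hst.le]
    exact Icc_subset_Icc hs htT
  have hvc : ContinuousOn v (Icc 0 T) := fun τ hτ => (hv τ hτ).continuousAt.continuousWithinAt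
  have hσc : ContinuousOn σ (Icc 0 T) := fun τ hτ => (hσ τ hτ).continuousAt.continuousWithinAt
  rw [← intervalIntegral.integral_const_mul, ← intervalIntegral.integral_const_mul]
  refine integral_add_integral_add_eq_of_hasDerivAt (f := fun r => F r (v r) (σ r))
    (fun τ hτ => ?_) ?_ ?_ ?_
  · replace hτ := hsub hτ
    have hdissip_v := heqv τ hτ (v' τ)
    rw [real_inner_self_eq_norm_sq] at hdissip_v
    have hdissip_σ := mul_eq_neg_of_mul_eq_max_neg_mul hε.ne' (hlampos (σ τ)).ne' (heqσ τ hτ)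
    convert hasDerivAt_comp_curve_of_partials ((hF.differentiable one_ne_zero) _)
      (hv τ hτ) (hσ τ hτ) using 1
    linear_combination -hdissip_v - hdissip_σ
  · exact ((hF.continuousOn_comp_partial₁ hvc hσc).mono hsub).intervalIntegrable
  · exact ((continuousOn_const.mul (hv'.norm.pow 2)).mono hsub).intervalIntegrable
  · exact ((continuousOn_const.mul ((hσ'.pow 2).div (hlamcont.comp_continuousOn hσc)
      fun τ _ => (hlampos _).ne')).mono hsub).intervalIntegrable

/-- The energy estimate of Theorem 3.5 (abstract form, with equality) for the
modified ε-gradient flow `ε·v̇ = −grad_vF`, `ε·σ̇ = (−∂_σF)⁺·λ(σ)`. -/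
theorem epsilon_gradient_flow_energy_estimate
    {V : Type*} [NormedAddCommGroup V] [InnerProductSpace ℝ V] [CompleteSpace V]
    (T ε : ℝ) (hT : 0 < T) (hε : 0 < ε)
    (F : ℝ → V → ℝ → ℝ)
    (hF : ContDiff ℝ 1 (fun p : ℝ × V × ℝ => F p.1 p.2.1 p.2.2))
    (lam : ℝ → ℝ) (hlamcont : Continuous lam) (hlampos : ∀ s : ℝ, 0 < lam s)
    (v : ℝ → V) (v' : ℝ → V) (σ σ' : ℝ → ℝ)
    (hv : ∀ t ∈ Icc (0:ℝ) T, HasDerivAt v (v' t) t)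
    (hv' : ContinuousOn v' (Icc 0 T))
    (hσ : ∀ t ∈ Icc (0:ℝ) T, HasDerivAt σ (σ' t) t)
    (hσ' : ContinuousOn σ' (Icc 0 T))
    (heqv : ∀ t ∈ Icc (0:ℝ) T, ∀ w : V,
      ε * ⟪v' t, w⟫ = -(fderiv ℝ (fun u => F t u (σ t)) (v t)) w)
    (heqσ : ∀ t ∈ Icc (0:ℝ) T,
      ε * σ' t = max (-(deriv (fun s => F t (v t) s) (σ t))) 0 * lam (σ t)) :
    ∀ s t : ℝ, 0 ≤ s → s < t → t ≤ T →
      ε * (∫ τ in s..t, ‖v' τ‖ ^ 2) + ε * (∫ τ in s..t, (σ' τ) ^ 2 / lam (σ τ))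
        + F t (v t) (σ t)
      = F s (v s) (σ s) + ∫ τ in s..t, deriv (fun r => F r (v τ) (σ τ)) τ :=
  epsilon_gradient_flow_energy_estimate_general T ε hε F hF lam hlamcont hlampos v v' σ σ' hv hv' hσ
    hσ' heqv heqσ
end

section
/- Let V be a real Hilbert space and let F : ℝ × V × ℝ → ℝ be such that for every t the map (v,σ) ↦ F(t,v,σ) is twice continuously Fréchet differentiable. Let t⁰ < t¹, β > 0, and let (v⁰,σ⁰) : [t⁰,t¹] → V × ℝ be continuously differentiable with ‖(v⁰)′(t)‖² + |(σ⁰)′(t)|² ≤ β for all t, and with D_vF(t,v⁰(t),σ⁰(t)) = 0 and ∂_σF(t,v⁰(t),σ⁰(t)) = 0 for every t ∈ [t⁰,t¹]. Assume there exist α > 0 and r > 0 such that for every t ∈ [t⁰,t¹] and every (v,σ) ∈ V × ℝ with ‖v − v⁰(t)‖ ≤ r and |σ − σ⁰(t)| ≤ r, the second differential satisfies D²_{(v,σ)}F(t,v,σ)[(w,τ),(w,τ)] ≥ α·(‖w‖² + τ²) for all (w,τ) ∈ V × ℝ. For each ε > 0 let (v_ε,σ_ε) : [t⁰,t¹] →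 V × ℝ be continuously differentiable and satisfy, for every t ∈ [t⁰,t¹]: ε·⟨v̇_ε(t), w⟩ = −D_vF(t,v_ε(t),σ_ε(t))(w) for all w ∈ V, and ε·σ̇_ε(t) = −∂_σF(t,v_ε(t),σ_ε(t)). If ‖v_ε(t⁰) − v⁰(t⁰)‖ → 0 and σ_ε(t⁰) → σ⁰(t⁰) as ε → 0⁺, then for every t ∈ [t⁰,t¹]: ‖v_ε(t) − v⁰(t)‖ → 0 and σ_ε(t) → σ⁰(t) as ε → 0⁺. -/
/-!
Measure the error `e = (v_ε - v⁰, σ_ε - σ⁰)` in the Euclidean norm of `V × ℝ`. Where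
`‖e‖ = ρ ≤ r`, the mean value theorem applied to the Hessian bound along the segment from the
critical point gives `ε ⟪(v̇_ε, σ̇_ε), e⟫ = -DF(v_ε, σ_ε) e ≤ -α ρ²`, while the critical path
moves with speed at most `√β`. Hence `d/dt ‖e‖² < 0` on the sphere `‖e‖ = ρ` as soon as
`ε √β < α ρ`, so the ball of radius `ρ` is invariant and
`‖e(t)‖ ≤ max (‖e(t⁰)‖, ε √β / α) → 0`.
-/

open Set Filter Topology WithLp
open scoped RealInnerProductSpace

section PartialDerivatives

variable {𝕜 E F G : Type*} [NontriviallyNormedField 𝕜] [NormedAddCommGroup E] [NormedSpace 𝕜 E]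
  [NormedAddCommGroup F] [NormedSpace 𝕜 F] [NormedAddCommGroup G] [NormedSpace 𝕜 G]

theorem fderiv_prod_apply_eq_add {f : E × F → G} {p : E × F} (hf : DifferentiableAt 𝕜 f p)
    (w : E) (τ : F) :
    fderiv 𝕜 f p (w, τ) =
      fderiv 𝕜 (fun u => f (u, p.2)) p.1 w + fderiv 𝕜 (fun s => f (p.1, s)) p.2 τ := by
  have hleft : HasFDerivAt (fun u => f (u, p.2)) ((fderiv 𝕜 f p).comp (.inl 𝕜 E F)) p.1 :=
    hf.hasFDerivAt.comp p.1 (hasFDerivAt_prodMk_left p.1 p.2)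
  have hright : HasFDerivAt (fun s => f (p.1, s)) ((fderiv 𝕜 f p).comp (.inr 𝕜 E F)) p.2 :=
    hf.hasFDerivAt.comp p.2 (hasFDerivAt_prodMk_right p.1 p.2)
  simp [hleft.fderiv, hright.fderiv, ← map_add]

theorem fderiv_uncurry_apply_eq_add {f : E → 𝕜 → G} {a : E} {b : 𝕜}
    (hf : DifferentiableAt 𝕜 (fun p : E × 𝕜 => f p.1 p.2) (a, b)) (w : E) (τ : 𝕜) :
    fderiv 𝕜 (fun p : E × 𝕜 => f p.1 p.2) (a, b) (w, τ) =
      fderiv 𝕜 (fun u => f u b) a w + τ • deriv (f a) b := by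
  simpa using fderiv_prod_apply_eq_add hf w τ

end PartialDerivatives

section RealCalculus

variable {E : Type*} [NormedAddCommGroup E] [NormedSpace ℝ E]

theorem le_fderiv_add_sub_fderiv {f : E → ℝ} (hf : Differentiable ℝ (fderiv ℝ f)) {p Δ : E}
    {m : ℝ} (hm : ∀ θ ∈ Ioo (0 : ℝ) 1, m ≤ fderiv ℝ (fderiv ℝ f) (p + θ • Δ) Δ Δ) :
    m ≤ fderiv ℝ f (p + Δ) Δ - fderiv ℝ f p Δ := by
  have hderiv : ∀ θ : ℝ, HasDerivAt (fun θ : ℝ => fderiv ℝ f (p + θ • Δ) Δ)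
      (fderiv ℝ (fderiv ℝ f) (p + θ • Δ) Δ Δ) θ := by
    intro θ
    have hline : HasDerivAt (fun θ : ℝ => p + θ • Δ) Δ θ := by
      simpa using ((hasDerivAt_id θ).smul_const Δ).const_add p
    exact ((hf _).hasFDerivAt.comp_hasDerivAt θ hline).clm_apply (hasDerivAt_const θ Δ)
      |>.congr_deriv (by simp)
  obtain ⟨θ, hθ, hslope⟩ := exists_hasDerivAt_eq_slope _ _ one_pos
    (fun θ _ => (hderiv θ).continuousAt.continuousWithinAt) (fun θ _ => hderiv θ)
  have := hm θ hθ
  rw [hslope] at this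
  simpa using this

theorem le_of_hasDerivAt_neg_of_eq {f f' : ℝ → ℝ} {a b c : ℝ}
    (hf : ∀ x ∈ Icc a b, HasDerivAt f (f' x) x) (ha : f a ≤ c)
    (hlevel : ∀ x ∈ Ico a b, f x = c → f' x < 0) : ∀ x ∈ Icc a b, f x ≤ c :=
  fun _ hx => image_le_of_deriv_right_lt_deriv_boundary
    (fun x hx => (hf x hx).continuousAt.continuousWithinAt)
    (fun x hx => (hf x (Ico_subset_Icc_self hx)).hasDerivWithinAt) (B' := fun _ => 0) ha
    (fun x => hasDerivAt_const x c) hlevel hx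

end RealCalculus

theorem inner_sub_neg_of_inner_le_neg_sq {H : Type*} [NormedAddCommGroup H]
    [InnerProductSpace ℝ H] {e u d : H} {ε α : ℝ} (hε : 0 < ε)
    (hu : ε * ⟪u, e⟫ ≤ -(α * ‖e‖ ^ 2)) (hd : ε * ‖d‖ < α * ‖e‖) : ⟪e, u - d⟫ < 0 := by
  have he : 0 < ‖e‖ := by
    by_contra! h
    rw [le_antisymm h (norm_nonneg e), mul_zero] at hd
    exact hd.not_ge (by positivity)
  have hcs : -⟪e, d⟫ ≤ ‖e‖ * ‖d‖ := (neg_le_abs _).trans (abs_real_inner_le_norm e d)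
  have : ε * ⟪e, u - d⟫ < 0 := by
    rw [inner_sub_right, real_inner_comm]
    nlinarith
  exact neg_of_mul_neg_right this hε.le

section GradientFlow

variable {V W : Type*} [NormedAddCommGroup V] [InnerProductSpace ℝ V] [NormedAddCommGroup W]
  [InnerProductSpace ℝ W]

theorem tendsto_norm_toLp_sub_iff {ι : Type*} {l : Filter ι} {f : ι → V × W} {z : V × W} :
    Tendsto (fun i => ‖toLp 2 (f i - z)‖) l (𝓝 0) ↔ Tendsto f l (𝓝 z) := by
  simp_rw [toLp_sub, ← tendsto_iff_norm_sub_tendsto_zero]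
  exact (prodContinuousLinearEquiv 2 ℝ V W).symm.toHomeomorph.isInducing.tendsto_nhds_iff.symm

theorem inner_toLp_sub_neg_of_strongly_convex {G : V × W → ℝ}
    (hG : Differentiable ℝ (fderiv ℝ G)) {p q u d : V × W} {ε α : ℝ} (hε : 0 < ε)
    (hcrit : fderiv ℝ G q = 0)
    (hflow : ε * ⟪toLp 2 u, toLp 2 (p - q)⟫ = -fderiv ℝ G p (p - q))
    (hconvex : ∀ θ ∈ Ioo (0 : ℝ) 1,
      α * ‖toLp 2 (p - q)‖ ^ 2 ≤ fderiv ℝ (fderiv ℝ G) (q + θ • (p - q)) (p - q) (p - q))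
    (hd : ε * ‖toLp 2 d‖ < α * ‖toLp 2 (p - q)‖) :
    ⟪toLp 2 (p - q), toLp 2 (u - d)⟫ < 0 := by
  have hmono := le_fderiv_add_sub_fderiv hG hconvex
  rw [add_sub_cancel, hcrit, zero_apply, sub_zero] at hmono
  have := inner_sub_neg_of_inner_le_neg_sq (u := toLp 2 u) hε (by linarith) hd
  rwa [← toLp_sub] at this

theorem norm_toLp_sub_le_of_gradient_flow {G : ℝ → V × W → ℝ} {x x' y y' : ℝ → V × W}
    {a b ε α β r ρ : ℝ} (hG : ∀ t, Differentiable ℝ (fderiv ℝ (G t)))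
    (hx : ∀ t ∈ Icc a b, HasDerivAt x (x' t) t) (hy : ∀ t ∈ Icc a b, HasDerivAt y (y' t) t)
    (hy' : ∀ t ∈ Icc a b, ‖toLp 2 (y' t)‖ ≤ β)
    (hcrit : ∀ t ∈ Icc a b, fderiv ℝ (G t) (y t) = 0)
    (hconvex : ∀ t ∈ Icc a b, ∀ p, ‖toLp 2 (p - y t)‖ ≤ r →
      ∀ Δ, α * ‖toLp 2 Δ‖ ^ 2 ≤ fderiv ℝ (fderiv ℝ (G t)) p Δ Δ)
    (hflow : ∀ t ∈ Icc a b, ∀ Δ, ε * ⟪toLp 2 (x' t), toLp 2 Δ⟫ = -fderiv ℝ (G t) (x t) Δ)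
    (hε : 0 < ε) (hρr : ρ ≤ r) (hερ : ε * β < α * ρ) (ha : ‖toLp 2 (x a - y a)‖ ≤ ρ) :
    ∀ t ∈ Icc a b, ‖toLp 2 (x t - y t)‖ ≤ ρ := by
  have hρ : 0 ≤ ρ := (norm_nonneg _).trans ha
  have hderiv : ∀ t ∈ Icc a b, HasDerivAt (fun t => ‖toLp 2 (x t - y t)‖ ^ 2)
      (2 * ⟪toLp 2 (x t - y t), toLp 2 (x' t - y' t)⟫) t := fun t ht =>
    ((prodContinuousLinearEquiv 2 ℝ V W).symm.hasFDerivAt.comp_hasDerivAt t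
      ((hx t ht).sub (hy t ht))).norm_sq
  have hlevel : ∀ t ∈ Ico a b, ‖toLp 2 (x t - y t)‖ ^ 2 = ρ ^ 2 →
      2 * ⟪toLp 2 (x t - y t), toLp 2 (x' t - y' t)⟫ < 0 := by
    intro t hto hsq
    have ht := Ico_subset_Icc_self hto
    have hρt : ‖toLp 2 (x t - y t)‖ = ρ := (pow_left_inj₀ (norm_nonneg _) hρ two_ne_zero).1 hsq
    refine mul_neg_of_pos_of_neg two_pos
      (inner_toLp_sub_neg_of_strongly_convex (α := α) (hG t) hε (hcrit t ht) (hflow t ht _) ?_ ?_)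
    · intro θ hθ
      refine hconvex t ht _ ?_ _
      rw [add_sub_cancel_left, toLp_smul, norm_smul, Real.norm_of_nonneg hθ.1.le, hρt]
      nlinarith [hθ.2]
    · rw [hρt]
      nlinarith [hy' t ht]
  intro t ht
  exact (pow_le_pow_iff_left₀ (norm_nonneg _) hρ two_ne_zero).1
    (le_of_hasDerivAt_neg_of_eq hderiv (by gcongr) hlevel t ht)

theorem tendsto_of_gradient_flow {G : ℝ → V × W → ℝ} {x x' : ℝ → ℝ → V × W}
    {y y' : ℝ → V × W} {a b α β r : ℝ} (hG : ∀ t, Differentiable ℝ (fderiv ℝ (G t)))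
    (hx : ∀ ε > 0, ∀ t ∈ Icc a b, HasDerivAt (x ε) (x' ε t) t)
    (hy : ∀ t ∈ Icc a b, HasDerivAt y (y' t) t) (hy' : ∀ t ∈ Icc a b, ‖toLp 2 (y' t)‖ ≤ β)
    (hcrit : ∀ t ∈ Icc a b, fderiv ℝ (G t) (y t) = 0) (hα : 0 < α) (hr : 0 < r)
    (hconvex : ∀ t ∈ Icc a b, ∀ p, ‖toLp 2 (p - y t)‖ ≤ r →
      ∀ Δ, α * ‖toLp 2 Δ‖ ^ 2 ≤ fderiv ℝ (fderiv ℝ (G t)) p Δ Δ)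
    (hflow : ∀ ε > 0, ∀ t ∈ Icc a b, ∀ Δ,
      ε * ⟪toLp 2 (x' ε t), toLp 2 Δ⟫ = -fderiv ℝ (G t) (x ε t) Δ)
    (hinit : Tendsto (fun ε => x ε a) (𝓝[>] 0) (𝓝 (y a))) :
    ∀ t ∈ Icc a b, Tendsto (fun ε => x ε t) (𝓝[>] 0) (𝓝 (y t)) := by
  intro t ht
  rw [← tendsto_norm_toLp_sub_iff] at hinit ⊢
  set M : ℝ → ℝ := fun ε => max ‖toLp 2 (x ε a - y a)‖ (ε * β / α)
  have hM : Tendsto M (𝓝[>] 0) (𝓝 0) := by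
    have hlin : Tendsto (fun ε : ℝ => ε * β / α) (𝓝[>] 0) (𝓝 0) :=
      tendsto_nhdsWithin_of_tendsto_nhds <| by
        simpa using (continuous_mul_const β).div_const α |>.tendsto 0
    simpa only [max_self] using hinit.max hlin
  have hbound : ∀ ε > 0, M ε < r → ‖toLp 2 (x ε t - y t)‖ ≤ M ε := by
    intro ε hε hMr
    refine le_of_forall_gt_imp_ge_of_dense fun ρ hρ => ?_
    have hmin : M ε < min ρ r := lt_min hρ hMr
    have hερ : ε * β < α * min ρ r := (div_lt_iff₀' hα).1 ((le_max_right _ _).trans_lt hmin)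
    exact (norm_toLp_sub_le_of_gradient_flow hG (hx ε hε) hy hy' hcrit hconvex (hflow ε hε) hε
      (min_le_right _ _) hερ ((le_max_left _ _).trans hmin.le) t ht).trans (min_le_left _ _)
  refine squeeze_zero' (Eventually.of_forall fun _ => norm_nonneg _) ?_ hM
  filter_upwards [self_mem_nhdsWithin, hM.eventually_lt_const hr] with ε hε hMr
    using hbound ε hε hMr

end GradientFlow

theorem epsilon_gradient_flow_converges_to_critical_path_general
    {V : Type*} [NormedAddCommGroup V] [InnerProductSpace ℝ V]
    (F : ℝ → V → ℝ → ℝ)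
    (hF : ∀ t : ℝ, ContDiff ℝ 2 (fun p : V × ℝ => F t p.1 p.2))
    (t0 t1 : ℝ) (β : ℝ)
    (v0 : ℝ → V) (v0' : ℝ → V) (s0 s0' : ℝ → ℝ)
    (hv0 : ∀ t ∈ Icc t0 t1, HasDerivAt v0 (v0' t) t)
    (hs0 : ∀ t ∈ Icc t0 t1, HasDerivAt s0 (s0' t) t)
    (hbound : ∀ t ∈ Icc t0 t1, ‖v0' t‖ ^ 2 + |s0' t| ^ 2 ≤ β)
    (hcrit1 : ∀ t ∈ Icc t0 t1, fderiv ℝ (fun w => F t w (s0 t)) (v0 t) = 0)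
    (hcrit2 : ∀ t ∈ Icc t0 t1, deriv (fun s => F t (v0 t) s) (s0 t) = 0)
    (α r : ℝ) (hα : 0 < α) (hr : 0 < r)
    (hposdef : ∀ t ∈ Icc t0 t1, ∀ (v : V) (s : ℝ),
      ‖v - v0 t‖ ≤ r → |s - s0 t| ≤ r →
      ∀ (w : V) (τ : ℝ),
        α * (‖w‖ ^ 2 + τ ^ 2) ≤
          (fderiv ℝ (fderiv ℝ (fun p : V × ℝ => F t p.1 p.2)) (v, s)) (w, τ) (w, τ))
    (vε : ℝ → ℝ → V) (vε' : ℝ → ℝ → V) (sε sε' : ℝ → ℝ → ℝ)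
    (hvε : ∀ ε > (0:ℝ), ∀ t ∈ Icc t0 t1, HasDerivAt (vε ε) (vε' ε t) t)
    (hsε : ∀ ε > (0:ℝ), ∀ t ∈ Icc t0 t1, HasDerivAt (sε ε) (sε' ε t) t)
    (heqv : ∀ ε > (0:ℝ), ∀ t ∈ Icc t0 t1, ∀ w : V,
      ε * ⟪vε' ε t, w⟫ = -(fderiv ℝ (fun u => F t u (sε ε t)) (vε ε t)) w)
    (heqs : ∀ ε > (0:ℝ), ∀ t ∈ Icc t0 t1,
      ε * sε' ε t = -(deriv (fun s => F t (vε ε t) s) (sε ε t)))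
    (hinitv : Filter.Tendsto (fun ε => ‖vε ε t0 - v0 t0‖)
      (nhdsWithin 0 (Ioi 0)) (nhds 0))
    (hinits : Filter.Tendsto (fun ε => sε ε t0)
      (nhdsWithin 0 (Ioi 0)) (nhds (s0 t0))) :
    ∀ t ∈ Icc t0 t1,
      Filter.Tendsto (fun ε => ‖vε ε t - v0 t‖) (nhdsWithin 0 (Ioi 0)) (nhds 0) ∧
      Filter.Tendsto (fun ε => sε ε t) (nhdsWithin 0 (Ioi 0)) (nhds (s0 t)) := by
  intro t ht
  have hpartial := fun t a b =>
    fderiv_uncurry_apply_eq_add ((hF t).differentiable two_ne_zero (a, b))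
  have hconv := tendsto_of_gradient_flow (G := fun t p => F t p.1 p.2)
    (x := fun ε t => (vε ε t, sε ε t)) (y := fun t => (v0 t, s0 t)) (β := √β)
    (fun t => ((hF t).fderiv_right (m := 1) le_rfl).differentiable one_ne_zero)
    (fun ε hε t ht => (hvε ε hε t ht).prodMk (hsε ε hε t ht))
    (fun t ht => (hv0 t ht).prodMk (hs0 t ht))
    (fun t ht => Real.le_sqrt_of_sq_le (by simpa [prod_norm_sq_eq_of_L2] using hbound t ht))
    (fun t ht => ContinuousLinearMap.ext fun _ => by simp [hpartial, hcrit1 t ht, hcrit2 t ht])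
    hα hr
    (fun t ht p hp Δ => by
      simpa [prod_norm_sq_eq_of_L2] using hposdef t ht p.1 p.2
        (by simpa using (WithLp.norm_fst_le V _).trans hp)
        (by simpa using (WithLp.norm_snd_le V _).trans hp) Δ.1 Δ.2)
    (fun ε hε t ht Δ => by
      simp only [prod_inner_apply, RCLike.inner_apply, Real.ringHom_apply, hpartial, smul_eq_mul]
      linear_combination heqv ε hε t ht Δ.1 + Δ.2 * heqs ε hε t ht)
    ((tendsto_iff_norm_sub_tendsto_zero.2 hinitv).prodMk_nhds hinits) t ht
  exact ⟨tendsto_iff_norm_sub_tendsto_zero.1 hconv.fst_nhds, hconv.snd_nhds⟩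

/-- Theorem 4.4 (convergence part, abstract form): along a path of critical points of `F`
near which the second differential of `F` in `(v,σ)` is uniformly strictly positive
definite, the solutions of the ε-gradient flow converge pointwise to the critical path
as ε → 0⁺. -/
theorem epsilon_gradient_flow_converges_to_critical_path
    {V : Type*} [NormedAddCommGroup V] [InnerProductSpace ℝ V] [CompleteSpace V]
    (F : ℝ → V → ℝ → ℝ)
    (hF : ∀ t : ℝ, ContDiff ℝ 2 (fun p : V × ℝ => F t p.1 p.2))
    (t0 t1 : ℝ) (ht01 : t0 < t1) (β : ℝ) (hβ : 0 < β)
    (v0 : ℝ → V) (v0' : ℝ → V) (s0 s0' : ℝ → ℝ)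
    (hv0 : ∀ t ∈ Icc t0 t1, HasDerivAt v0 (v0' t) t)
    (hv0' : ContinuousOn v0' (Icc t0 t1))
    (hs0 : ∀ t ∈ Icc t0 t1, HasDerivAt s0 (s0' t) t)
    (hs0' : ContinuousOn s0' (Icc t0 t1))
    (hbound : ∀ t ∈ Icc t0 t1, ‖v0' t‖ ^ 2 + |s0' t| ^ 2 ≤ β)
    (hcrit1 : ∀ t ∈ Icc t0 t1, fderiv ℝ (fun w => F t w (s0 t)) (v0 t) = 0)
    (hcrit2 : ∀ t ∈ Icc t0 t1, deriv (fun s => F t (v0 t) s) (s0 t) = 0)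
    (α r : ℝ) (hα : 0 < α) (hr : 0 < r)
    (hposdef : ∀ t ∈ Icc t0 t1, ∀ (v : V) (s : ℝ),
      ‖v - v0 t‖ ≤ r → |s - s0 t| ≤ r →
      ∀ (w : V) (τ : ℝ),
        α * (‖w‖ ^ 2 + τ ^ 2) ≤
          (fderiv ℝ (fderiv ℝ (fun p : V × ℝ => F t p.1 p.2)) (v, s)) (w, τ) (w, τ))
    (vε : ℝ → ℝ → V) (vε' : ℝ → ℝ → V) (sε sε' : ℝ → ℝ → ℝ)
    (hvε : ∀ ε > (0:ℝ), ∀ t ∈ Icc t0 t1, HasDerivAt (vε ε) (vε' ε t) t)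
    (hvε' : ∀ ε > (0:ℝ), ContinuousOn (vε' ε) (Icc t0 t1))
    (hsε : ∀ ε > (0:ℝ), ∀ t ∈ Icc t0 t1, HasDerivAt (sε ε) (sε' ε t) t)
    (hsε' : ∀ ε > (0:ℝ), ContinuousOn (sε' ε) (Icc t0 t1))
    (heqv : ∀ ε > (0:ℝ), ∀ t ∈ Icc t0 t1, ∀ w : V,
      ε * ⟪vε' ε t, w⟫ = -(fderiv ℝ (fun u => F t u (sε ε t)) (vε ε t)) w)
    (heqs : ∀ ε > (0:ℝ), ∀ t ∈ Icc t0 t1,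
      ε * sε' ε t = -(deriv (fun s => F t (vε ε t) s) (sε ε t)))
    (hinitv : Filter.Tendsto (fun ε => ‖vε ε t0 - v0 t0‖)
      (nhdsWithin 0 (Ioi 0)) (nhds 0))
    (hinits : Filter.Tendsto (fun ε => sε ε t0)
      (nhdsWithin 0 (Ioi 0)) (nhds (s0 t0))) :
    ∀ t ∈ Icc t0 t1,
      Filter.Tendsto (fun ε => ‖vε ε t - v0 t‖) (nhdsWithin 0 (Ioi 0)) (nhds 0) ∧
      Filter.Tendsto (fun ε => sε ε t) (nhdsWithin 0 (Ioi 0)) (nhds (s0 t)) :=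
  epsilon_gradient_flow_converges_to_critical_path_general F hF t0 t1 β v0 v0' s0 s0' hv0 hs0 hbound
    hcrit1 hcrit2 α r hα hr hposdef vε vε' sε sε' hvε hsε heqv heqs hinitv hinits
end
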